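/- arXiv:math/0209227 — 6 statements merged into one kernel-verified Lean document; each statement's English description precedes it below -/
import Mathlib

section
/- Let π ∈ S_n be a Schröder permutation and let σ ∈ S_n be a 132-avoiding permutation with E(σ) = E*(π). Then for any k ≥ 1, π avoids the increasing pattern 12⋯k if and only if σ avoids 12⋯k. -/
/-- `π` contains the pattern `τ`: there is a strictly increasing choice of positions
whose values appear in the same relative order as `τ`. -/
def Contains {n k : ℕ} (π : Equiv.Perm (Fin n)) (τ : Equiv.Perm (Fin k)) : Prop :=
  ∃ f : Fin k → Fin n, StrictMono f ∧ ∀ a b : Fin k, τ a < τ b ↔ π (f a) < π (f b)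

/-- `π` avoids the pattern `τ`. -/
def Avoids {n k : ℕ} (π : Equiv.Perm (Fin n)) (τ : Equiv.Perm (Fin k)) : Prop :=
  ¬ Contains π τ

/-- The pattern 1243 (in one-line notation), as a permutation of `Fin 4` (0-based). -/
def pat1243 : Equiv.Perm (Fin 4) := Equiv.swap 2 3

/-- The pattern 2143 (in one-line notation), as a permutation of `Fin 4` (0-based). -/
def pat2143 : Equiv.Perm (Fin 4) := Equiv.swap 0 1 * Equiv.swap 2 3

/-- A Schröder permutation avoids both 1243 and 2143. -/
def Schroeder {n : ℕ} (π : Equiv.Perm (Fin n)) : Prop :=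
  Avoids π pat1243 ∧ Avoids π pat2143

/-- The diagram of `π` (0-based coordinates): squares `(i,j)` with `π i > j` and
`π⁻¹ j > i`. -/
def Diagram {n : ℕ} (π : Equiv.Perm (Fin n)) : Set (Fin n × Fin n) :=
  {p | p.2 < π p.1 ∧ p.1 < π.symm p.2}

/-- The essential set of `π`: squares of the diagram whose east and south neighbours
are not in the diagram. -/
def EssSet {n : ℕ} (π : Equiv.Perm (Fin n)) : Set (Fin n × Fin n) :=
  {p | p ∈ Diagram π ∧
    (∀ i' : Fin n, (i' : ℕ) = (p.1 : ℕ) + 1 → (i', p.2) ∉ Diagram π) ∧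
    (∀ j' : Fin n, (j' : ℕ) = (p.2 : ℕ) + 1 → (p.1, j') ∉ Diagram π)}

/-- The rank of a square `(i,j)`: the number of positions `k < i` with `π k < j`. -/
def rank {n : ℕ} (π : Equiv.Perm (Fin n)) (p : Fin n × Fin n) : ℕ :=
  (Finset.univ.filter fun k : Fin n => k < p.1 ∧ π k < p.2).card

/-- The pattern 132, as a permutation of `Fin 3` (0-based one-line notation `0 2 1`). -/
def pat132 : Equiv.Perm (Fin 3) := Equiv.swap 1 2

/-- `E*(π)`: the set obtained from the essential set of `π` by keeping the rank-0 elements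
and replacing every rank-1 element `(i,j)` by `(i-1, j-1)`. -/
def Estar {n : ℕ} (π : Equiv.Perm (Fin n)) : Set (Fin n × Fin n) :=
  {p | p ∈ EssSet π ∧ rank π p = 0} ∪
  {q | ∃ p, p ∈ EssSet π ∧ rank π p = 1 ∧
        (q.1 : ℕ) + 1 = (p.1 : ℕ) ∧ (q.2 : ℕ) + 1 = (p.2 : ℕ)}

/-!
Index the squares of `Fin n × Fin n` as in a permutation matrix, with the dot of row `i` in
column `π i`, and call a square `(a, b)` dominated by a set `E` if some square of `E` lies weakly
south-east of it. For a Schröder permutation, a diagram square has at most one dot north-west of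
it. Hence `(a, b)` is dominated by `E*(π)` exactly when either no dot lies weakly north-west of
`(a, b)`, or `(a + 1, b + 1)` is a diagram square.

This criterion detects increasing subsequences: `π` avoids `12⋯k` iff every square on the
antidiagonal `a + b = n - k` is dominated. If `(a, b)` is not, some dot `e` lies north-west of it
and `(a + 1, b + 1)` is not a diagram square; then an inversion south-east of `(a, b)` would have,
besides `e`, the dot of row `a + 1` or of column `b + 1` north-west of it, forming a 1243 or a
2143. So `e` and the dots south-east of `(a, b)` form an increasing sequence of length at least
`n - a - b`. Conversely, if the antidiagonal `a + b = d` is dominated, every dot `u` south-east of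
another dot has `u + π u ≥ d + 3`. It follows that more than `d` dots lie above or left of a dot
`t` with `t + π t > d`, and more than `d + 1` if some dot is north-west of `t`. An increasing
sequence avoids the dots above or left of its first element, or of its second one when the first
has `t + π t ≤ d`, so it has fewer than `n - d` elements.

A 132-avoiding `σ` is Schröder and all its diagram squares have rank `0`, so
`E*(σ) = E(σ) = E*(π)`, and the criterion gives the same answer for `π` and `σ`.
-/

open Finset

section

variable {n : ℕ} {π : Equiv.Perm (Fin n)}

theorem Contains.trans {k m : ℕ} {τ : Equiv.Perm (Fin k)} {ρ : Equiv.Perm (Fin m)}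
    (hπ : Contains π τ) (hτ : Contains τ ρ) : Contains π ρ := by
  obtain ⟨f, hf, hfπ⟩ := hπ
  obtain ⟨g, hg, hgτ⟩ := hτ
  exact ⟨f ∘ g, hf.comp hg, fun a b => (hgτ a b).trans (hfπ (g a) (g b))⟩

theorem contains_of_apply_eq {k : ℕ} {τ : Equiv.Perm (Fin k)} {f g : Fin k → Fin n}
    (hf : StrictMono f) (hg : StrictMono g) (h : ∀ a, π (f a) = g (τ a)) : Contains π τ :=
  ⟨f, hf, fun a b => by rw [h, h, hg.lt_iff_lt]⟩

theorem strictMono_vecCons_three {α : Type*} [Preorder α] {x y z : α} (hxy : x < y)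
    (hyz : y < z) : StrictMono ![x, y, z] :=
  Fin.strictMono_iff_lt_succ.2 fun i => by fin_cases i <;> assumption

theorem strictMono_vecCons_four {α : Type*} [Preorder α] {w x y z : α} (hwx : w < x)
    (hxy : x < y) (hyz : y < z) : StrictMono ![w, x, y, z] :=
  Fin.strictMono_iff_lt_succ.2 fun i => by fin_cases i <;> assumption

theorem pat1243_contains_pat132 : Contains pat1243 pat132 :=
  ⟨![1, 2, 3], by decide, by decide⟩

theorem pat2143_contains_pat132 : Contains pat2143 pat132 :=
  ⟨![1, 2, 3], by decide, by decide⟩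

theorem Schroeder.of_avoids_pat132 (h : Avoids π pat132) : Schroeder π :=
  ⟨fun h' => h (h'.trans pat1243_contains_pat132),
    fun h' => h (h'.trans pat2143_contains_pat132)⟩

theorem Schroeder.eq_of_lt_of_inversion (h : Schroeder π) {p q i l : Fin n} (hp : p < i)
    (hq : q < i) (hil : i < l) (hpl : π p < π l) (hql : π q < π l) (hli : π l < π i) :
    p = q := by
  by_contra hne
  wlog hpq : p < q generalizing p q
  · exact this hq hp hql hpl (Ne.symm hne) (lt_of_le_of_ne (not_lt.1 hpq) (Ne.symm hne))
  rcases lt_or_gt_of_ne (π.injective.ne hne) with hv | hv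
  · exact h.1 (contains_of_apply_eq (strictMono_vecCons_four hpq hq hil)
      (strictMono_vecCons_four hv hql hli) fun a => by fin_cases a <;> rfl)
  · exact h.2 (contains_of_apply_eq (strictMono_vecCons_four hpq hq hil)
      (strictMono_vecCons_four hv hpl hli) fun a => by fin_cases a <;> rfl)

theorem contains_one_iff {k : ℕ} :
    Contains π (1 : Equiv.Perm (Fin k)) ↔
      ∃ S : Finset (Fin n), k ≤ #S ∧ StrictMonoOn π S := by
  constructor
  · rintro ⟨f, hf, hfπ⟩
    refine ⟨univ.map ⟨f, hf.injective⟩, by simp, ?_⟩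
    simp only [coe_map, coe_univ, Set.image_univ]
    rintro _ ⟨a, rfl⟩ _ ⟨b, rfl⟩ hab
    exact (hfπ a b).1 (hf.lt_iff_lt.1 hab)
  · rintro ⟨S, hk, hS⟩
    obtain ⟨T, hTS, hT⟩ := exists_subset_card_eq hk
    have hmem (a : Fin k) : (T.orderEmbOfFin hT a : Fin n) ∈ (S : Set (Fin n)) :=
      hTS (T.orderEmbOfFin_mem hT a)
    refine ⟨T.orderEmbOfFin hT, (T.orderEmbOfFin hT).strictMono, fun a b => ?_⟩
    rw [Equiv.Perm.one_apply, Equiv.Perm.one_apply, hS.lt_iff_lt (hmem a) (hmem b),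
      OrderEmbedding.lt_iff_lt]

def nwDots (π : Equiv.Perm (Fin n)) (c : Fin n × Fin n) : Finset (Fin n) :=
  {k | k < c.1 ∧ π k < c.2}

@[simp] theorem mem_nwDots {c : Fin n × Fin n} {k : Fin n} :
    k ∈ nwDots π c ↔ k < c.1 ∧ π k < c.2 := by
  simp [nwDots]

theorem card_nwDots (c : Fin n × Fin n) : #(nwDots π c) = rank π c := rfl

theorem nwDots_south_eq {p : Fin n × Fin n} (hp : p ∈ Diagram π) {i : Fin n}
    (hi : (i : ℕ) = p.1 + 1) : nwDots π (i, p.2) = nwDots π p := by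
  ext k
  simp only [mem_nwDots]
  refine and_congr_left fun hk => ?_
  rw [Fin.lt_def, Fin.lt_def, hi, Nat.lt_succ_iff, le_iff_lt_or_eq, or_iff_left]
  exact fun h => (Fin.ext h ▸ hk).not_gt hp.1

theorem nwDots_east_eq {p : Fin n × Fin n} (hp : p ∈ Diagram π) {j : Fin n}
    (hj : (j : ℕ) = p.2 + 1) : nwDots π (p.1, j) = nwDots π p := by
  ext k
  simp only [mem_nwDots]
  refine and_congr_right fun hk => ?_
  rw [Fin.lt_def, Fin.lt_def, hj, Nat.lt_succ_iff, le_iff_lt_or_eq, or_iff_left]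
  intro h
  have := hp.2
  rw [← Fin.ext h, Equiv.symm_apply_apply] at this
  exact this.not_gt hk

theorem mem_nwDots_of_le {c : Fin n × Fin n} {k : Fin n} (hc : c ∈ Diagram π) (h1 : k ≤ c.1)
    (h2 : π k ≤ c.2) : k ∈ nwDots π c := by
  refine mem_nwDots.2 ⟨h1.lt_of_ne ?_, h2.lt_of_ne ?_⟩
  · rintro rfl
    exact h2.not_gt hc.1
  · intro hk
    have := hc.2
    rw [← hk, Equiv.symm_apply_apply] at this
    exact h1.not_gt this

theorem mem_diagram_of_le {c p : Fin n × Fin n} (hp : p ∈ Diagram π) (hcp : c ≤ p)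
    (hsub : nwDots π p ⊆ nwDots π c) : c ∈ Diagram π := by
  refine ⟨lt_of_not_ge fun h => ?_, lt_of_not_ge fun h => ?_⟩
  · have := hsub (mem_nwDots_of_le hp hcp.1 (h.trans hcp.2))
    exact (mem_nwDots.1 this).1.false
  · have := hsub (mem_nwDots_of_le hp (h.trans hcp.1) (by simpa using hcp.2))
    simpa using (mem_nwDots.1 this).2

theorem exists_essSet_ge {c : Fin n × Fin n} (hc : c ∈ Diagram π) :
    ∃ p ∈ EssSet π, c ≤ p ∧ rank π p = rank π c := by
  classical
  obtain ⟨p, hpT, hmax⟩ := exists_max_image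
    {p | p ∈ Diagram π ∧ c ≤ p ∧ nwDots π p = nwDots π c} (fun p => (p.1 : ℕ) + p.2)
    ⟨c, by simpa using hc⟩
  simp only [mem_filter, mem_univ, true_and] at hpT
  obtain ⟨hp, hcp, hdots⟩ := hpT
  have hstep (q : Fin n × Fin n) (hq : q ∈ Diagram π) (hpq : p ≤ q)
      (hlt : (p.1 : ℕ) + p.2 < q.1 + q.2) (hdq : nwDots π q = nwDots π p) : False :=
    (hmax q (by simp [hq, hcp.trans hpq, hdq, hdots])).not_gt hlt
  refine ⟨p, ⟨hp, fun i hi hiD => ?_, fun j hj hjD => ?_⟩, hcp, by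
    rw [← card_nwDots, hdots, card_nwDots]⟩
  · refine hstep (i, p.2) hiD ⟨Fin.le_def.2 ?_, le_rfl⟩ ?_ (nwDots_south_eq hp hi) <;>
      simp only <;> omega
  · refine hstep (p.1, j) hjD ⟨le_rfl, Fin.le_def.2 ?_⟩ ?_ (nwDots_east_eq hp hj) <;>
      simp only <;> omega

theorem Schroeder.rank_le_one (h : Schroeder π) {c : Fin n × Fin n} (hc : c ∈ Diagram π) :
    rank π c ≤ 1 := by
  rw [← card_nwDots]
  refine card_le_one.2 fun p hp q hq => ?_
  rw [mem_nwDots] at hp hq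
  refine h.eq_of_lt_of_inversion (l := π.symm c.2) hp.1 hq.1 hc.2 ?_ ?_ ?_ <;>
    simp [hp.2, hq.2, hc.1]

theorem rank_eq_zero_of_avoids_pat132 (h : Avoids π pat132) {c : Fin n × Fin n}
    (hc : c ∈ Diagram π) : rank π c = 0 := by
  rw [← card_nwDots]
  refine card_eq_zero.2 (eq_empty_of_forall_notMem fun k hk => h ?_)
  rw [mem_nwDots] at hk
  refine contains_of_apply_eq (f := ![k, c.1, π.symm c.2]) (g := ![π k, c.2, π c.1])
    (strictMono_vecCons_three hk.1 hc.2) (strictMono_vecCons_three hk.2 hc.1) fun a => ?_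
  fin_cases a <;> first | rfl | simp [pat132]

theorem estar_eq_essSet_of_avoids_pat132 (h : Avoids π pat132) : Estar π = EssSet π := by
  ext p
  simp only [Estar, Set.mem_union, Set.mem_ofPred_eq]
  constructor
  · rintro (⟨hp, -⟩ | ⟨q, hq, hrank, -⟩)
    · exact hp
    · rw [rank_eq_zero_of_avoids_pat132 h hq.1] at hrank
      exact absurd hrank zero_ne_one
  · exact fun hp => Or.inl ⟨hp, rank_eq_zero_of_avoids_pat132 h hp.1⟩

-- Squares in `ℕ` coordinates, so that `(a + 1, b + 1)` can be named without a bound.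
variable (π) in
def HasDotNW (a b : ℕ) : Prop :=
  ∃ p : Fin n, (p : ℕ) ≤ a ∧ (π p : ℕ) ≤ b

variable (π) in
def InDiagram (i j : ℕ) : Prop :=
  ∃ c ∈ Diagram π, (c.1 : ℕ) = i ∧ (c.2 : ℕ) = j

def Dominated (E : Set (Fin n × Fin n)) (a b : ℕ) : Prop :=
  ∃ q ∈ E, a ≤ q.1 ∧ b ≤ q.2

theorem not_hasDotNW_iff (c : Fin n × Fin n) :
    ¬HasDotNW π c.1 c.2 ↔ c ∈ Diagram π ∧ rank π c = 0 := by
  constructor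
  · intro h
    refine ⟨⟨lt_of_not_ge fun h' => h ⟨c.1, le_rfl, h'⟩,
      lt_of_not_ge fun h' => h ⟨π.symm c.2, h', by simp⟩⟩, ?_⟩
    rw [← card_nwDots, card_eq_zero, eq_empty_iff_forall_notMem]
    exact fun k hk => h ⟨k, (mem_nwDots.1 hk).1.le, (mem_nwDots.1 hk).2.le⟩
  · rintro ⟨hc, hrank⟩ ⟨k, h1, h2⟩
    rw [← card_nwDots, card_eq_zero] at hrank
    simpa [hrank] using mem_nwDots_of_le hc h1 h2

theorem Schroeder.dominated_estar_iff (h : Schroeder π) {a b : ℕ} (ha : a < n) (hb : b < n) :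
    Dominated (Estar π) a b ↔ (HasDotNW π a b → InDiagram π (a + 1) (b + 1)) := by
  constructor
  · rintro ⟨q, (⟨hq, hrank⟩ | ⟨p, hp, hrank, hp1, hp2⟩), hqa, hqb⟩ ⟨e, hea, heb⟩
    · exact absurd ⟨e, hea.trans hqa, heb.trans hqb⟩ ((not_hasDotNW_iff q).2 ⟨hq.1, hrank⟩)
    · let c : Fin n × Fin n := (⟨a + 1, by omega⟩, ⟨b + 1, by omega⟩)
      have he : e ∈ nwDots π p :=
        mem_nwDots.2 ⟨Fin.lt_def.2 (by omega), Fin.lt_def.2 (by omega)⟩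
      have hsub : nwDots π p ⊆ nwDots π c := fun k hk => by
        rw [card_le_one.1 (card_nwDots p ▸ hrank.le) k hk e he]
        exact mem_nwDots.2
          ⟨Fin.lt_def.2 (by simp [c]; omega), Fin.lt_def.2 (by simp [c]; omega)⟩
      exact ⟨c, mem_diagram_of_le hp.1 ⟨Fin.le_def.2 (by simp [c]; omega),
        Fin.le_def.2 (by simp [c]; omega)⟩ hsub, rfl, rfl⟩
  · intro himp
    by_cases hbox : HasDotNW π a b
    · obtain ⟨c, hc, hc1, hc2⟩ := himp hbox
      obtain ⟨p, hp, ⟨hcp1, hcp2⟩, -⟩ := exists_essSet_ge hc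
      rw [Fin.le_def] at hcp1 hcp2
      rcases Nat.le_one_iff_eq_zero_or_eq_one.1 (h.rank_le_one hp.1) with h0 | h1
      · exact ⟨p, Or.inl ⟨hp, h0⟩, by omega, by omega⟩
      · exact ⟨(⟨p.1 - 1, by omega⟩, ⟨p.2 - 1, by omega⟩),
          Or.inr ⟨p, hp, h1, by simp; omega, by simp; omega⟩, by simp; omega, by simp; omega⟩
    · obtain ⟨hc, hrank⟩ := (not_hasDotNW_iff (⟨a, ha⟩, ⟨b, hb⟩)).1 hbox
      obtain ⟨p, hp, hcp, hrank'⟩ := exists_essSet_ge hc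
      exact ⟨p, Or.inl ⟨hp, hrank'.trans hrank⟩, hcp.1, hcp.2⟩

variable (π) in
def aboveOrLeft (t : Fin n) : Finset (Fin n) :=
  {s | s < t ∨ π s < π t}

variable (π) in
theorem card_aboveOrLeft_add_rank (t : Fin n) :
    #(aboveOrLeft π t) + rank π (t, π t) = t + π t := by
  have hrows : #({s | s < t} : Finset (Fin n)) = t := by
    rw [filter_gt_eq_Iio, Fin.card_Iio]
  have hcols : #({s | π s < π t} : Finset (Fin n)) = π t := by
    rw [← Fin.card_Iio (π t), ← card_map π.toEmbedding]
    congr 1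
    ext s
    simp only [mem_filter, mem_univ, true_and, mem_map, mem_Iio, Equiv.coe_toEmbedding]
    exact ⟨fun ⟨a, ha, has⟩ => has ▸ ha,
      fun h => ⟨π.symm s, by simpa using h, π.apply_symm_apply s⟩⟩
  have := card_union_add_card_inter ({s | s < t} : Finset (Fin n)) {s | π s < π t}
  rwa [← filter_or, ← filter_and, hrows, hcols] at this

theorem aboveOrLeft_subset {s t : Fin n} (h1 : s ≤ t) (h2 : π s ≤ π t) :
    aboveOrLeft π s ⊆ aboveOrLeft π t := by
  intro k
  simp only [aboveOrLeft, mem_filter, mem_univ, true_and]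
  rintro (hk | hk)
  exacts [Or.inl (hk.trans_le h1), Or.inr (hk.trans_le h2)]

theorem card_aboveOrLeft_lt {s t : Fin n} (h1 : s < t) (h2 : π s < π t) :
    #(aboveOrLeft π s) < #(aboveOrLeft π t) :=
  card_lt_card <| (ssubset_iff_of_subset (aboveOrLeft_subset h1.le h2.le)).2
    ⟨s, by simp [aboveOrLeft, h1], by simp [aboveOrLeft]⟩

theorem card_add_card_aboveOrLeft_le {S : Finset (Fin n)} {t : Fin n}
    (hS : ∀ s ∈ S, t ≤ s ∧ π t ≤ π s) : #S + #(aboveOrLeft π t) ≤ n := by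
  rw [← card_union_of_disjoint]
  · exact (card_le_univ _).trans_eq (Fintype.card_fin n)
  · refine disjoint_left.2 fun s hs hs' => ?_
    simp only [aboveOrLeft, mem_filter, mem_univ, true_and] at hs'
    rcases hs' with h | h
    exacts [(hS s hs).1.not_gt h, (hS s hs).2.not_gt h]

-- By `Schroeder.dominated_estar_iff`, every square of the antidiagonal is dominated by `E*(π)`.
variable (π) in
def CoversAntidiagonal (d : ℕ) : Prop :=
  ∀ a b, a + b = d → HasDotNW π a b → InDiagram π (a + 1) (b + 1)

namespace CoversAntidiagonal

variable {d : ℕ}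

theorem add_three_le (hd : CoversAntidiagonal π d) {e x : Fin n} (hex : e < x)
    (hx : (x : ℕ) + π e ≤ d + 1) : d + 3 ≤ (x : ℕ) + π x := by
  rw [Fin.lt_def] at hex
  obtain ⟨c, hc, hc1, hc2⟩ := hd (x - 1) (d + 1 - x) (by omega) ⟨e, by omega, by omega⟩
  have hcx : c.1 = x := Fin.ext (by omega)
  have := Fin.lt_def.1 hc.1
  rw [hcx] at this
  omega

theorem add_three_le_of_lt (hd : CoversAntidiagonal π d) {e u : Fin n} (h1 : e < u)
    (h2 : π e < π u) : d + 3 ≤ (u : ℕ) + π u := by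
  by_cases hu : (u : ℕ) + π e ≤ d + 1
  · exact hd.add_three_le h1 hu
  · rw [Fin.lt_def] at h2
    omega

theorem add_two_le_card_aboveOrLeft_of_nwDots_le (hd : CoversAntidiagonal π d) {u : Fin n}
    (hne : (nwDots π (u, π u)).Nonempty)
    (hlow : ∀ s ∈ nwDots π (u, π u), (s : ℕ) + π s ≤ d) :
    d + 2 ≤ #(aboveOrLeft π u) := by
  obtain ⟨e, he, hmax⟩ := exists_max_image (nwDots π (u, π u)) (fun s => π s) hne
  have heu : e < u ∧ π e < π u := mem_nwDots.1 he
  have hel := hlow e he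
  -- The other dots north-west of `u` lie south-west of `e`, so `add_three_le` bounds their rows.
  have hrows : #((nwDots π (u, π u)).erase e) ≤ #(Ico (d + 2 - π e) (u : ℕ)) := by
    refine card_le_card_of_injOn Fin.val (fun s hs => ?_) Fin.val_injective.injOn
    obtain ⟨hse, hs⟩ := mem_erase.1 hs
    have hsu : s < u ∧ π s < π u := mem_nwDots.1 hs
    have hsl := hlow s hs
    have hlt : π s < π e := (hmax s hs).lt_of_ne (π.injective.ne hse)
    have hes : e < s := lt_of_not_ge fun h => by
      have := hd.add_three_le_of_lt (h.lt_of_ne hse) hlt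
      omega
    have hcol : ¬(s : ℕ) + π e ≤ d + 1 := fun hcol => by
      have := hd.add_three_le hes hcol
      omega
    rw [coe_Ico, Set.mem_Ico]
    rw [Fin.lt_def] at hsu
    omega
  have hw := hd.add_three_le_of_lt heu.1 heu.2
  have hcard := card_aboveOrLeft_add_rank π u
  rw [← card_nwDots, ← card_erase_add_one he] at hcard
  rw [Nat.card_Ico] at hrows
  rw [Fin.lt_def, Fin.lt_def] at heu
  omega

theorem add_two_le_card_aboveOrLeft (hd : CoversAntidiagonal π d) {t : Fin n}
    (hne : (nwDots π (t, π t)).Nonempty) : d + 2 ≤ #(aboveOrLeft π t) := by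
  have ht : d < (t : ℕ) + π t := by
    obtain ⟨s, hs⟩ := hne
    have hst : s < t ∧ π s < π t := mem_nwDots.1 hs
    have := hd.add_three_le_of_lt hst.1 hst.2
    omega
  -- `u` is the topmost dot weakly north-west of `t` with `d < u + π u`.
  obtain ⟨u, hu, hmin⟩ := exists_min_image
    ({s : Fin n | d < (s : ℕ) + π s ∧ s ≤ t ∧ π s ≤ π t} : Finset (Fin n)) id
    ⟨t, by simpa using ht⟩
  simp only [mem_filter, mem_univ, true_and] at hu
  obtain ⟨hu, hut, hπut⟩ := hu
  have hsub := card_le_card (aboveOrLeft_subset hut hπut)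
  by_cases hneu : (nwDots π (u, π u)).Nonempty
  · refine (hd.add_two_le_card_aboveOrLeft_of_nwDots_le hneu fun s hs => ?_).trans hsub
    by_contra hs'
    have hs := mem_nwDots.1 hs
    exact (hmin s (by simp [hs.1.le.trans hut, hs.2.le.trans hπut]; omega)).not_gt hs.1
  · have hut' : u ≠ t := by
      rintro rfl
      exact hneu hne
    have h0 : rank π (u, π u) = 0 := by
      rw [← card_nwDots, card_eq_zero]
      exact not_nonempty_iff_eq_empty.1 hneu
    have := card_aboveOrLeft_add_rank π u
    have := card_aboveOrLeft_lt (hut.lt_of_ne hut') (hπut.lt_of_ne (π.injective.ne hut'))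
    omega

theorem lt_card_aboveOrLeft (hd : CoversAntidiagonal π d) {t : Fin n}
    (ht : d < (t : ℕ) + π t) : d < #(aboveOrLeft π t) := by
  by_cases hne : (nwDots π (t, π t)).Nonempty
  · have := hd.add_two_le_card_aboveOrLeft hne
    omega
  · have := card_aboveOrLeft_add_rank π t
    rw [← card_nwDots, not_nonempty_iff_eq_empty.1 hne, card_empty] at this
    omega

theorem add_one_lt (hd : CoversAntidiagonal π d) (hdn : d < n) : d + 1 < n := by
  by_cases h : d < π ⟨0, by omega⟩
  · have := (π ⟨0, by omega⟩).isLt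
    omega
  · obtain ⟨c, -, -, hc⟩ := hd 0 d (zero_add d) ⟨⟨0, by omega⟩, le_rfl, by omega⟩
    have := c.2.isLt
    omega

theorem card_add_lt (hd : CoversAntidiagonal π d) (hdn : d < n) {S : Finset (Fin n)}
    (hS : StrictMonoOn π S) : #S + d < n := by
  have hmin (T : Finset (Fin n)) (hT : T ⊆ S) (hne : T.Nonempty) :
      ∃ t ∈ T, ∀ s ∈ T, t ≤ s ∧ π t ≤ π s :=
    ⟨T.min' hne, T.min'_mem hne, fun s hs =>
      ⟨T.min'_le s hs, hS.monotoneOn (hT (T.min'_mem hne)) (hT hs) (T.min'_le s hs)⟩⟩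
  rcases S.eq_empty_or_nonempty with rfl | hne
  · simpa using hdn
  obtain ⟨t, ht, htS⟩ := hmin S subset_rfl hne
  by_cases hlow : d < (t : ℕ) + π t
  · have := card_add_card_aboveOrLeft_le htS
    have := hd.lt_card_aboveOrLeft hlow
    omega
  have hcard := card_erase_add_one ht
  rcases (S.erase t).eq_empty_or_nonempty with h0 | hne'
  · rw [h0, card_empty] at hcard
    have := hd.add_one_lt hdn
    omega
  obtain ⟨t', ht', ht'S⟩ := hmin _ (erase_subset t S) hne'
  obtain ⟨htt', ht'⟩ := mem_erase.1 ht'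
  have hlt : t < t' := lt_of_le_of_ne (htS t' ht').1 (Ne.symm htt')
  have := card_add_card_aboveOrLeft_le ht'S
  have := hd.add_two_le_card_aboveOrLeft (t := t') ⟨t, mem_nwDots.2 ⟨hlt, hS ht ht' hlt⟩⟩
  omega

end CoversAntidiagonal

theorem Schroeder.lt_of_not_inDiagram (h : Schroeder π) {a b : ℕ} (hbox : HasDotNW π a b)
    (hnot : ¬InDiagram π (a + 1) (b + 1)) {i j : Fin n} (hai : a < i) (hbj : b < π j)
    (hij : i < j) : π i < π j := by
  obtain ⟨e, hea, heb⟩ := hbox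
  by_contra hji
  replace hji : π j < π i := lt_of_le_of_ne (not_lt.1 hji) (π.injective.ne hij.ne')
  have hij' := Fin.lt_def.1 hij
  have hji' := Fin.lt_def.1 hji
  -- Besides `e`, the dot in row `a + 1` or the one in column `b + 1` is north-west of `(i, j)`.
  suffices ∃ z, z ≠ e ∧ z < i ∧ π z < π j by
    obtain ⟨z, hze, hzi, hzj⟩ := this
    exact hze (h.eq_of_lt_of_inversion (q := e) hzi (Fin.lt_def.2 (by omega)) hij hzj
      (Fin.lt_def.2 (by omega)) hji)
  let x : Fin n := ⟨a + 1, by omega⟩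
  have hxe : x ≠ e := fun hxe => by
    have := congrArg Fin.val hxe
    simp only [x] at this
    omega
  by_cases hx : x < i ∧ π x < π j
  · exact ⟨x, hxe, hx⟩
  have hbx : b + 1 < π x := by
    rcases (show x ≤ i from Fin.le_def.2 (by simp only [x]; omega)).lt_or_eq with hxi | hxi
    · have hne : π x ≠ π j := π.injective.ne (hxi.trans hij).ne
      have := Fin.lt_def.1 (lt_of_le_of_ne (not_lt.1 fun h => hx ⟨hxi, h⟩) hne.symm)
      omega
    · rw [hxi]
      omega
  let y : Fin n := π.symm ⟨b + 1, by omega⟩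
  have hπy : (π y : ℕ) = b + 1 := by simp [y]
  have hya : (y : ℕ) ≤ a := by
    have hyx : (y : ℕ) ≠ a + 1 := fun h' => by
      rw [show y = x from Fin.ext h'] at hπy
      omega
    have : ¬(a + 1 < y) := fun hy =>
      hnot ⟨(x, ⟨b + 1, by omega⟩), ⟨Fin.lt_def.2 hbx, Fin.lt_def.2 hy⟩, rfl, rfl⟩
    omega
  have hjy : (π j : ℕ) ≠ b + 1 := fun h' => by
    rw [show j = y from π.injective (Fin.ext (h'.trans hπy.symm))] at hij'
    omega
  exact ⟨y, fun hye => by rw [hye] at hπy; omega, Fin.lt_def.2 (by omega),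
    Fin.lt_def.2 (by omega)⟩

theorem HasDotNW.le_add_card {a b : ℕ} (hbox : HasDotNW π a b) :
    n ≤ a + b + 1 + #({s | a < s ∧ b < π s} : Finset (Fin n)) := by
  obtain ⟨e, hea, heb⟩ := hbox
  let X : Finset (Fin n) := {s | (s : ℕ) ≤ a}
  let Y : Finset (Fin n) := {s | (π s : ℕ) ≤ b}
  have hX : #X ≤ a + 1 := (card_le_card_of_injOn Fin.val
    (fun s hs => by simp [X] at hs ⊢; omega) Fin.val_injective.injOn).trans_eq (card_range _)
  have hY : #Y ≤ b + 1 := (card_le_card_of_injOn (fun s => (π s : ℕ))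
    (fun s hs => by simp [Y] at hs ⊢; omega)
    (fun s _ t _ hst => π.injective (Fin.ext hst))).trans_eq (card_range _)
  have hXY : 1 ≤ #(X ∩ Y) := card_pos.2 ⟨e, by simp [X, Y, hea, heb]⟩
  have hunion : ({s | a < s ∧ b < π s} : Finset (Fin n)) ∪ (X ∪ Y) = univ := by
    ext s
    simp only [X, Y, mem_union, mem_filter, mem_univ, true_and, iff_true]
    omega
  have hcompl := card_union_le ({s | a < s ∧ b < π s} : Finset (Fin n)) (X ∪ Y)
  rw [hunion, card_univ, Fintype.card_fin] at hcompl
  have := card_union_add_card_inter X Y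
  omega

theorem Schroeder.exists_strictMonoOn (h : Schroeder π) {a b : ℕ} (hbox : HasDotNW π a b)
    (hnot : ¬InDiagram π (a + 1) (b + 1)) :
    ∃ S : Finset (Fin n), StrictMonoOn π S ∧ n ≤ a + b + #S := by
  obtain ⟨e, hea, heb⟩ := id hbox
  let R : Finset (Fin n) := {s | a < s ∧ b < π s}
  have heR : e ∉ R := by simp [R]; omega
  refine ⟨insert e R, ?_, ?_⟩
  · intro i hi j hj hij
    simp only [coe_insert, Set.mem_insert_iff, mem_coe, R, mem_filter, mem_univ, true_and] at hi hj
    rcases hi with rfl | hi <;> rcases hj with rfl | hj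
    · exact absurd hij (lt_irrefl _)
    · exact Fin.lt_def.2 (by omega)
    · exact absurd hij (not_lt.2 (Fin.le_def.2 (by omega)))
    · exact h.lt_of_not_inDiagram hbox hnot hi.1 hj.2 hij
  · rw [card_insert_of_notMem heR]
    have : n ≤ a + b + 1 + #R := hbox.le_add_card
    omega

theorem Schroeder.avoids_one_iff (h : Schroeder π) (k : ℕ) :
    Avoids π (1 : Equiv.Perm (Fin k)) ↔ ∀ a b, a + b + k = n → Dominated (Estar π) a b := by
  rw [Avoids, contains_one_iff]
  constructor
  · intro hav a b habk
    by_contra hdom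
    obtain rfl | hk := k.eq_zero_or_pos
    · exact hav ⟨∅, le_rfl, fun _ h => absurd h (by simp)⟩
    rw [h.dominated_estar_iff (by omega) (by omega), Classical.not_imp] at hdom
    obtain ⟨S, hS, hcard⟩ := h.exists_strictMonoOn hdom.1 hdom.2
    exact hav ⟨S, by omega, hS⟩
  · rintro hdom ⟨S, hk, hS⟩
    have hkn : k ≤ n := hk.trans ((card_le_univ S).trans_eq (Fintype.card_fin n))
    obtain ⟨q, -, hq, -⟩ := hdom (n - k) 0 (by omega)
    have hcov : CoversAntidiagonal π (n - k) := fun a b hab =>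
      (h.dominated_estar_iff (by omega) (by omega)).1 (hdom a b (by omega))
    have := hcov.card_add_lt (by omega) hS
    omega

end

theorem avoids_increasing_iff_general (n : ℕ) (π σ : Equiv.Perm (Fin n)) (hπ : Schroeder π)
    (hσ : Avoids σ pat132) (hE : EssSet σ = Estar π) (k : ℕ) :
    Avoids π (1 : Equiv.Perm (Fin k)) ↔ Avoids σ (1 : Equiv.Perm (Fin k)) := by
  rw [hπ.avoids_one_iff, (Schroeder.of_avoids_pat132 hσ).avoids_one_iff,
    estar_eq_essSet_of_avoids_pat132 hσ, hE]

/-- Let `π` be a Schröder permutation and `σ` a 132-avoiding permutation with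
`E(σ) = E*(π)`. Then for any `k ≥ 1`, `π` avoids the increasing pattern `12⋯k`
(the identity of `Fin k`) iff `σ` does. -/
theorem avoids_increasing_iff (n : ℕ) (π σ : Equiv.Perm (Fin n)) (hπ : Schroeder π)
    (hσ : Avoids σ pat132) (hE : EssSet σ = Estar π) (k : ℕ) (hk : 1 ≤ k) :
    Avoids π (1 : Equiv.Perm (Fin k)) ↔ Avoids σ (1 : Equiv.Perm (Fin k)) :=
  avoids_increasing_iff_general n π σ hπ hσ hE k
end

section
/- Let π ∈ S_n be a Schröder permutation and k ≥ 3. Then π avoids the pattern 213⋯k (the permutation 2,1,3,4,…,k of {1,…,k}) if and only if every element (i,j) ∈ E(π) satisfies i + j ≥ n + 3 − k + ρ(i,j). -/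
/-!
Write `SE(a, b)` for the set of positions `p ≥ a` with `π p ≥ b`. Counting gives
`|SE(i, j)| + i + j = n + ρ(i, j)` (0-based), so the inequality at `(i, j)` says `|SE(i, j)| < k`.
At an essential square, `SE(i, j)` consists of `i`, `π⁻¹ j` and `SE(i + 2, j + 2)`, and the last set
is exactly the set of entries after and above the inversion `(π⁻¹ (j + 1), i + 1)`; conversely every
inversion `(c, d)` lies weakly south-east of an essential square `(i, j)` with `i < d`, `j < π c`.
Hence the condition says that every inversion `c < d`, `π d < π c` has fewer than `k - 2` later
entries above `π c`. As `π` avoids 2143, such entries always increase, so `k - 2` of them together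
with the inversion are an occurrence of `213⋯k`.
-/

section

open Finset

/-- Natural-number coordinates, so that shifts such as `a + 2` need no bound. -/
def southeast {n : ℕ} (π : Equiv.Perm (Fin n)) (a b : ℕ) : Finset (Fin n) :=
  univ.filter fun p => a ≤ (p : ℕ) ∧ b ≤ (π p : ℕ)

variable {n : ℕ} {π : Equiv.Perm (Fin n)}

@[simp]
theorem mem_southeast {a b : ℕ} {p : Fin n} :
    p ∈ southeast π a b ↔ a ≤ (p : ℕ) ∧ b ≤ (π p : ℕ) := by
  simp [southeast]

theorem southeast_subset_southeast {a b a' b' : ℕ} (ha : a ≤ a') (hb : b ≤ b') :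
    southeast π a' b' ⊆ southeast π a b := fun p hp => by
  rw [mem_southeast] at hp ⊢
  omega

theorem card_southeast_add_eq_add_rank (p : Fin n × Fin n) :
    (southeast π p.1 p.2).card + p.1 + p.2 = n + rank π p := by
  set A := univ.filter fun q : Fin n => q < p.1
  set B := univ.filter fun q : Fin n => π q < p.2
  have hA : A.card = p.1 := by simpa [A] using Fin.card_filter_val_lt (n := n) (m := p.1)
  have hB : B.card = p.2 := by
    rw [card_equiv π (t := univ.filter fun v : Fin n => v < p.2) (by simp [B])]
    simpa using Fin.card_filter_val_lt (n := n) (m := p.2)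
  have hrank : rank π p = (A ∩ B).card := by rw [rank, filter_and]
  have hse : southeast π p.1 p.2 = (A ∪ B)ᶜ := by
    ext q
    simp [A, B]
  have := card_union_add_card_inter A B
  have := card_add_card_compl (A ∪ B)
  rw [Fintype.card_fin] at this
  rw [hse, hrank]
  omega

theorem contains_iff_strictMono {k : ℕ} {τ : Equiv.Perm (Fin k)} :
    Contains π τ ↔ ∃ f : Fin k → Fin n, StrictMono f ∧ StrictMono (π ∘ f ∘ τ.symm) := by
  refine exists_congr fun f => and_congr_right fun _ => ⟨fun h a b hab => ?_, fun h a b => ?_⟩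
  · simpa using (h (τ.symm a) (τ.symm b)).1 (by simpa using hab)
  · simpa using (h.lt_iff_lt (a := τ a) (b := τ b)).symm

theorem Equiv.swap_zero_one_succ_succ {m : ℕ} (i : Fin m) :
    Equiv.swap (0 : Fin (m + 2)) 1 i.succ.succ = i.succ.succ :=
  Equiv.swap_apply_of_ne_of_ne (Fin.succ_ne_zero _) (by simp [Fin.ext_iff])

theorem strictMonoOn_southeast (h : Avoids π pat2143) {c d : Fin n} (hcd : c < d)
    (hinv : π d < π c) : StrictMonoOn π (southeast π (d + 1) (π c + 1) : Set (Fin n)) := by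
  intro p hp q hq hpq
  simp only [mem_coe, mem_southeast] at hp hq
  by_contra hqp
  refine h (contains_iff_strictMono.2 ⟨![c, d, p, q], ?_, ?_⟩)
  · simpa using ⟨hcd, Fin.lt_def.2 (by omega), hpq⟩
  · have : π ∘ ![c, d, p, q] ∘ pat2143.symm = ![π d, π c, π q, π p] := by
      funext i; fin_cases i <;> rfl
    rw [this]
    simpa using ⟨hinv, Fin.lt_def.2 (by omega),
      lt_of_le_of_ne (not_lt.1 hqp) (π.injective.ne hpq.ne')⟩

theorem Contains.exists_inversion {m : ℕ} (h : Contains π (Equiv.swap (0 : Fin (m + 2)) 1)) :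
    ∃ c d : Fin n, c < d ∧ π d < π c ∧ m ≤ (southeast π (d + 1) (π c + 1)).card := by
  obtain ⟨f, hf, hτ⟩ := h
  refine ⟨f 0, f 1, hf Fin.zero_lt_one, (hτ 1 0).1 (by simp), ?_⟩
  have hmaps : ∀ i ∈ (univ : Finset (Fin m)),
      f i.succ.succ ∈ southeast π (f 1 + 1) (π (f 0) + 1) := by
    intro i _
    have h1 := hf (show (1 : Fin (m + 2)) < i.succ.succ from Fin.lt_def.2 (by simp))
    have h0 := (hτ 0 i.succ.succ).1 (by simp [Equiv.swap_zero_one_succ_succ, Fin.lt_def])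
    rw [Fin.lt_def] at h0 h1
    simp only [mem_southeast]
    omega
  simpa using card_le_card_of_injOn _ hmaps fun i _ j _ hij => by simpa using hf.injective hij

theorem contains_swap_of_inversion (h : Avoids π pat2143) {m : ℕ} {c d : Fin n} (hcd : c < d)
    (hinv : π d < π c) (hm : m ≤ (southeast π (d + 1) (π c + 1)).card) :
    Contains π (Equiv.swap (0 : Fin (m + 2)) 1) := by
  obtain ⟨g, hgS⟩ : ∃ g : Fin m ↪o Fin n, ∀ i, g i ∈ southeast π (d + 1) (π c + 1) := by
    obtain ⟨S, hS, hcard⟩ := exists_subset_card_eq hm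
    exact ⟨S.orderEmbOfFin hcard, fun i => hS (S.orderEmbOfFin_mem hcard i)⟩
  have hg : ∀ i, d < g i ∧ π c < π (g i) := fun i => by
    have := mem_southeast.1 (hgS i)
    simp only [Fin.lt_def]
    omega
  have hπg : StrictMono (π ∘ g) := fun i j hij =>
    strictMonoOn_southeast h hcd hinv (hgS i) (hgS j) (g.strictMono hij)
  have hcomp : π ∘ Fin.cons c (Fin.cons d g) ∘ (Equiv.swap (0 : Fin (m + 2)) 1).symm =
      Fin.cons (π d) (Fin.cons (π c) (π ∘ g)) := by
    funext i
    refine Fin.cases ?_ (Fin.cases ?_ fun i => ?_) i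
    · simp
    · simp
    · simp [Equiv.swap_zero_one_succ_succ]
  refine contains_iff_strictMono.2 ⟨Fin.cons c (Fin.cons d g), ?_, ?_⟩
  · simp only [Fin.strictMono_cons, Fin.forall_fin_succ, Fin.cons_zero, Fin.cons_succ]
    exact ⟨⟨hcd, fun i => hcd.trans (hg i).1⟩, fun i => (hg i).1, g.strictMono⟩
  · rw [hcomp]
    simp only [Fin.strictMono_cons, Fin.forall_fin_succ, Fin.cons_zero, Fin.cons_succ]
    exact ⟨⟨hinv, fun i => hinv.trans (hg i).2⟩, fun i => (hg i).2, hπg⟩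

theorem avoids_swap_zero_one_iff (h : Avoids π pat2143) {m : ℕ} :
    Avoids π (Equiv.swap (0 : Fin (m + 2)) 1) ↔
      ∀ c d : Fin n, c < d → π d < π c → (southeast π (d + 1) (π c + 1)).card < m := by
  refine ⟨fun hav c d hcd hinv => ?_, fun hlt hcon => ?_⟩
  · by_contra! hm
    exact hav (contains_swap_of_inversion h hcd hinv hm)
  · obtain ⟨c, d, hcd, hinv, hm⟩ := hcon.exists_inversion
    exact (hlt c d hcd hinv).not_ge hm

theorem mem_essSet_iff {p : Fin n × Fin n} :
    p ∈ EssSet π ↔ p ∈ Diagram π ∧ (∀ q : Fin n, (q : ℕ) = p.1 + 1 → (π q : ℕ) ≤ p.2) ∧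
      ∀ q : Fin n, (π q : ℕ) = p.2 + 1 → (q : ℕ) ≤ p.1 := by
  obtain ⟨i, j⟩ := p
  obtain ⟨b, rfl⟩ := π.surjective j
  simp only [EssSet, Diagram, Set.mem_ofPred_eq, Equiv.symm_apply_apply, Fin.lt_def, not_and,
    not_lt]
  refine and_congr_right fun ⟨hb, hi⟩ => and_congr (forall_congr' fun q => ?_)
    (π.forall_congr_right.symm.trans (forall_congr' fun q => ?_))
  · have : (q : ℕ) = b ↔ (π q : ℕ) = π b := by simp [Fin.val_inj]
    omega
  · have : (q : ℕ) = i ↔ (π q : ℕ) = π i := by simp [Fin.val_inj]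
    simp only [Equiv.symm_apply_apply]
    omega

theorem card_southeast_of_mem_essSet {p : Fin n × Fin n} (hp : p ∈ EssSet π) :
    (southeast π p.1 p.2).card = (southeast π (p.1 + 2) (p.2 + 2)).card + 2 := by
  obtain ⟨⟨hj, hi⟩, hsouth, heast⟩ := mem_essSet_iff.1 hp
  obtain ⟨i, j⟩ := p
  obtain ⟨b, rfl⟩ := π.surjective j
  simp only [Equiv.symm_apply_apply, Fin.lt_def] at hj hi hsouth heast ⊢
  have hsplit : southeast π i (π b) = insert i (insert b (southeast π (i + 2) (π b + 2))) := by
    ext q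
    have hqb : (q : ℕ) = b ↔ (π q : ℕ) = π b := by simp [Fin.val_inj]
    have hqi : (q : ℕ) = i ↔ (π q : ℕ) = π i := by simp [Fin.val_inj]
    have := hsouth q
    have := heast q
    simp only [mem_southeast, mem_insert, Fin.ext_iff]
    omega
  rw [hsplit, card_insert_of_notMem, card_insert_of_notMem]
  · simp
  · simp [Fin.ext_iff]
    omega

theorem exists_inversion_of_mem_essSet {p : Fin n × Fin n} (hp : p ∈ EssSet π) :
    ∃ c d : Fin n, c < d ∧ π d < π c ∧ (d : ℕ) = p.1 + 1 ∧ (π c : ℕ) = p.2 + 1 := by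
  obtain ⟨⟨hj, hi⟩, hsouth, heast⟩ := mem_essSet_iff.1 hp
  rw [Fin.lt_def] at hj hi
  let d : Fin n := ⟨p.1 + 1, by omega⟩
  let c : Fin n := π.symm ⟨p.2 + 1, by omega⟩
  have hc : (π c : ℕ) = p.2 + 1 := by simp [c]
  have := hsouth d rfl
  have := heast c hc
  exact ⟨c, d, Fin.lt_def.2 (by simp only [d]; omega), Fin.lt_def.2 (by omega), rfl, hc⟩

theorem exists_mem_essSet_of_inversion {c d : Fin n} (hcd : c < d) (hinv : π d < π c) :
    ∃ p ∈ EssSet π, (p.1 : ℕ) < d ∧ (p.2 : ℕ) < π c := by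
  obtain ⟨i, ⟨hid, hdi⟩, hi_max⟩ : ∃ i, (i < d ∧ π d < π i) ∧
      ∀ q, q < d → π d < π q → q ≤ i := by
    let F := univ.filter fun q => q < d ∧ π d < π q
    have hF : F.Nonempty := ⟨c, by simp [F, hcd, hinv]⟩
    exact ⟨F.max' hF, by simpa [F] using F.max'_mem hF,
      fun q h1 h2 => F.le_max' q (by simp [F, h1, h2])⟩
  obtain ⟨m, ⟨hdm, hmi⟩, hm_min⟩ : ∃ m, (π d < m ∧ π.symm m ≤ i) ∧
      ∀ v, π d < v → π.symm v ≤ i → m ≤ v := by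
    let V := univ.filter fun v => π d < v ∧ π.symm v ≤ i
    have hV : V.Nonempty := ⟨π c, by simpa [V] using ⟨hinv, hi_max c hcd hinv⟩⟩
    exact ⟨V.min' hV, by simpa [V] using V.min'_mem hV,
      fun v h1 h2 => V.min'_le v (by simp [V, h1, h2])⟩
  have hm_le_c : m ≤ π c := hm_min _ hinv (by simpa using hi_max c hcd hinv)
  have hm_le_i : m ≤ π i := hm_min _ hdi (by simp)
  rw [Fin.lt_def] at hid hdi hdm
  rw [Fin.le_def] at hm_le_c hm_le_i
  obtain ⟨j, hj⟩ : ∃ j : Fin n, (j : ℕ) = m - 1 := ⟨⟨m - 1, by omega⟩, rfl⟩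
  refine ⟨(i, j), mem_essSet_iff.2 ⟨⟨Fin.lt_def.2 (show (j : ℕ) < π i by omega), ?_⟩,
    fun q hq => ?_, fun q hq => ?_⟩, hid, show (j : ℕ) < π c by omega⟩
  · by_cases hjd : j = π d
    · simpa [hjd] using hid
    · by_contra! h
      have := hm_min j (lt_of_le_of_ne (Fin.le_def.2 (by omega)) (Ne.symm hjd)) h
      rw [Fin.le_def] at this
      omega
  · dsimp only at hq ⊢
    by_cases hqd : q = d
    · subst hqd
      omega
    · by_contra! h
      have := hi_max q (lt_of_le_of_ne (Fin.le_def.2 (by omega)) hqd) (Fin.lt_def.2 (by omega))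
      rw [Fin.le_def] at this
      omega
  · dsimp only at hq ⊢
    have : π q = m := Fin.ext (by omega)
    simpa [← this] using hmi

theorem forall_inversion_card_southeast_lt_iff (m : ℕ) :
    (∀ c d : Fin n, c < d → π d < π c → (southeast π (d + 1) (π c + 1)).card < m) ↔
      ∀ p ∈ EssSet π, (southeast π (p.1 + 2) (p.2 + 2)).card < m := by
  refine ⟨fun h p hp => ?_, fun h c d hcd hinv => ?_⟩
  · obtain ⟨c, d, hcd, hinv, hd, hc⟩ := exists_inversion_of_mem_essSet hp
    simpa [hd, hc, add_assoc] using h c d hcd hinv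
  · obtain ⟨p, hp, hpd, hpc⟩ := exists_mem_essSet_of_inversion hcd hinv
    exact (card_le_card (southeast_subset_southeast (by omega) (by omega))).trans_lt (h p hp)

end

/-- `(p.1 + 1, p.2 + 1)` are the 1-based coordinates of `p`, and the inequality is rearranged to
avoid truncated subtraction. -/
theorem avoids_213k_iff (n k : ℕ) (hk : 3 ≤ k) (π : Equiv.Perm (Fin n))
    (hπ : Schroeder π) :
    Avoids π (Equiv.swap (⟨0, by omega⟩ : Fin k) ⟨1, by omega⟩) ↔
      ∀ p ∈ EssSet π,
        n + 3 + rank π p ≤ ((p.1 : ℕ) + 1) + ((p.2 : ℕ) + 1) + k := by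
  obtain ⟨m, rfl⟩ : ∃ m, k = m + 2 := ⟨k - 2, by omega⟩
  change Avoids π (Equiv.swap 0 1) ↔ _
  rw [avoids_swap_zero_one_iff hπ.2, forall_inversion_card_southeast_lt_iff]
  refine forall₂_congr fun p hp => ?_
  have := card_southeast_add_eq_add_rank (π := π) p
  have := card_southeast_of_mem_essSet hp
  omega
end

section
/- A Schröder permutation π ∈ S_n avoids the pattern 231 if and only if (i) every row of {1,…,n}×{1,…,n} that contains a diagram square of π contains exactly one element of E(π), and (ii) every column that contains a diagram square of π contains at most one element of E(π). -/
/-- The pattern 231 (0-based one-line notation `1 2 0`), as the rotation of `Fin 3`. -/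
def pat231 : Equiv.Perm (Fin 3) := finRotate 3

section Helpers
variable {n : ℕ} (π : Equiv.Perm (Fin n))

lemma no231 {a b c : Fin n} (h : Avoids π pat231) (hab : a < b) (hbc : b < c)
    (h1 : π c < π a) (h2 : π a < π b) : False := by
  apply h
  simp only [Fin.lt_def] at h1 h2 hab hbc
  refine ⟨fun x => if x.1 = 0 then a else if x.1 = 1 then b else c, ?_, ?_⟩
  · intro x y hxy
    simp only [Fin.lt_def] at hxy ⊢
    fin_cases x <;> fin_cases y <;> simp_all <;> omega
  · intro x y
    fin_cases x <;> fin_cases y <;>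
      first
        | exact iff_of_true (by decide) (by simp only [Fin.lt_def]; simp; try omega)
        | exact iff_of_false (by decide)
            (by simp only [Fin.lt_def, not_lt, Fin.le_def]; simp; try omega)

lemma noSchro {p q r s : Fin n} (h : Schroeder π) (h1 : p < q) (h2 : q < r) (h3 : r < s)
    (h4 : π p < π s) (h5 : π q < π s) (h6 : π s < π r) : False := by
  simp only [Fin.lt_def] at h1 h2 h3 h4 h5 h6
  rcases lt_trichotomy (π p) (π q) with hpq | hpq | hpq
  · apply h.1
    simp only [Fin.lt_def] at hpq
    refine ⟨fun x => if x.1 = 0 then p else if x.1 = 1 then q else if x.1 = 2 then r else s,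
      ?_, ?_⟩
    · intro x y hxy
      simp only [Fin.lt_def] at hxy ⊢
      fin_cases x <;> fin_cases y <;> simp_all <;> omega
    · intro x y
      fin_cases x <;> fin_cases y <;>
        first
          | exact iff_of_true (by decide) (by simp only [Fin.lt_def]; simp; try omega)
          | exact iff_of_false (by decide)
              (by simp only [Fin.lt_def, not_lt, Fin.le_def]; simp; try omega)
  · exact absurd (π.injective hpq) (by intro hh; subst hh; omega)
  · apply h.2
    simp only [Fin.lt_def] at hpq
    refine ⟨fun x => if x.1 = 0 then p else if x.1 = 1 then q else if x.1 = 2 then r else s,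
      ?_, ?_⟩
    · intro x y hxy
      simp only [Fin.lt_def] at hxy ⊢
      fin_cases x <;> fin_cases y <;> simp_all <;> omega
    · intro x y
      fin_cases x <;> fin_cases y <;>
        first
          | exact iff_of_true (by decide) (by simp only [Fin.lt_def]; simp; try omega)
          | exact iff_of_false (by decide)
              (by simp only [Fin.lt_def, not_lt, Fin.le_def]; simp; try omega)

lemma of_contains231 (h : Contains π pat231) :
    ∃ a b c : Fin n, a < b ∧ b < c ∧ π c < π a ∧ π a < π b := by
  obtain ⟨f, hmono, hf⟩ := h
  refine ⟨f 0, f 1, f 2, hmono (by decide), hmono (by decide), ?_, ?_⟩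
  · exact (hf 2 0).mp (by decide)
  · exact (hf 0 1).mp (by decide)

lemma diag_iff {i j : Fin n} :
    (i, j) ∈ Diagram π ↔ ((j : ℕ) < (π i : ℕ) ∧ (i : ℕ) < (π.symm j : ℕ)) := by
  unfold Diagram
  simp only [Set.mem_setOf_eq, Fin.lt_def]

lemma succ_lt {i j : Fin n} (h : (i, j) ∈ Diagram π) : (i : ℕ) + 1 < n ∧ (j : ℕ) + 1 < n := by
  rw [diag_iff] at h
  have h1 := (π.symm j).2
  have h2 := (π i).2
  omega

lemma symm_apply_val {j : Fin n} : (π (π.symm j) : ℕ) = (j : ℕ) := by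
  rw [Equiv.apply_symm_apply]

lemma mem_ess_iff {i j isucc jsucc : Fin n} (hD : (i, j) ∈ Diagram π)
    (hi : (isucc : ℕ) = (i : ℕ) + 1) (hj : (jsucc : ℕ) = (j : ℕ) + 1) :
    (i, j) ∈ EssSet π ↔
      ((π isucc : ℕ) ≤ (j : ℕ) ∧
        ((j : ℕ) + 1 = (π i : ℕ) ∨ (π.symm jsucc : ℕ) ≤ (i : ℕ))) := by
  rw [diag_iff] at hD
  constructor
  · rintro ⟨-, hs, he⟩
    dsimp only at hs he
    have hs' := hs isucc hi
    have he' := he jsucc hj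
    rw [diag_iff] at hs' he'
    push_neg at hs' he'
    constructor
    · by_contra hc
      push_neg at hc
      have hne : ((π.symm j : ℕ)) ≠ (isucc : ℕ) := by
        intro e
        have e2 : π.symm j = isucc := Fin.ext e
        have : (π isucc : ℕ) = (j : ℕ) := by rw [← e2, Equiv.apply_symm_apply]
        omega
      have := hs' hc
      omega
    · by_cases hcase : (j : ℕ) + 1 = (π i : ℕ)
      · exact Or.inl hcase
      · refine Or.inr ?_
        have : (jsucc : ℕ) < (π i : ℕ) := by omega
        exact he' this
  · rintro ⟨h1, h2⟩
    refine ⟨by rw [diag_iff]; exact hD, ?_, ?_⟩ <;> dsimp only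
    · intro i' hi'
      have e : i' = isucc := Fin.ext (by omega)
      subst e
      rw [diag_iff]
      rintro ⟨c1, c2⟩
      omega
    · intro j' hj'
      have e : j' = jsucc := Fin.ext (by omega)
      subst e
      rw [diag_iff]
      rintro ⟨c1, c2⟩
      rcases h2 with h2 | h2 <;> omega

lemma exists_max (i : Fin n) (h : ∃ j, (i, j) ∈ Diagram π) :
    ∃ M : Fin n, (i, M) ∈ Diagram π ∧ ∀ j, (i, j) ∈ Diagram π → j ≤ M := by
  classical
  obtain ⟨j0, hj0⟩ := h
  set S : Finset (Fin n) := Finset.univ.filter (fun j => (i, j) ∈ Diagram π) with hS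
  have hne : S.Nonempty := ⟨j0, by simp [hS, hj0]⟩
  refine ⟨S.max' hne, ?_, ?_⟩
  · have := S.max'_mem hne
    simp [hS] at this
    exact this
  · intro j hj
    exact S.le_max' j (by simp [hS, hj])

/-- Row `i` (nonempty) contains exactly one essential square, given 231-avoidance. -/
lemma row_unique (hav : Avoids π pat231) (i : Fin n) (hne : ∃ j, (i, j) ∈ Diagram π) :
    ∃! j : Fin n, (i, j) ∈ EssSet π := by
  obtain ⟨M, hMD, hMmax⟩ := exists_max π i hne
  obtain ⟨hin, hMn⟩ := succ_lt π hMD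
  set isucc : Fin n := ⟨(i : ℕ) + 1, hin⟩ with hisucc
  set Msucc : Fin n := ⟨(M : ℕ) + 1, hMn⟩ with hMsucc
  have hivel : (isucc : ℕ) = (i : ℕ) + 1 := rfl
  have hMvel : (Msucc : ℕ) = (M : ℕ) + 1 := rfl
  have hMD' := (diag_iff π).mp hMD
  -- south condition: π (i+1) ≤ M
  have hsouth : (π isucc : ℕ) ≤ (M : ℕ) := by
    by_contra hc
    push_neg at hc
    rcases lt_or_ge ((π isucc : ℕ)) ((π i : ℕ)) with hlt | hge
    · have hd : (i, π isucc) ∈ Diagram π := by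
        rw [diag_iff]
        refine ⟨hlt, ?_⟩
        rw [Equiv.symm_apply_apply]
        omega
      have hle := hMmax _ hd
      rw [Fin.le_def] at hle
      omega
    · -- π i < π (i+1) : build a 231 pattern (i, i+1, π⁻¹ M)
      have hne2 : (π isucc : ℕ) ≠ (π i : ℕ) := by
        intro e
        have hti : isucc = i := π.injective (Fin.ext e)
        have e3 : (isucc : ℕ) = (i : ℕ) := congrArg Fin.val hti
        omega
      have hsymmM : (π (π.symm M) : ℕ) = (M : ℕ) := symm_apply_val π
      have hne3 : ((π.symm M : ℕ)) ≠ (isucc : ℕ) := by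
        intro e
        have e2 : π.symm M = isucc := Fin.ext e
        rw [e2] at hsymmM
        omega
      refine no231 π hav (a := i) (b := isucc) (c := π.symm M) ?_ ?_ ?_ ?_
      · rw [Fin.lt_def]; omega
      · rw [Fin.lt_def]; omega
      · rw [Fin.lt_def, hsymmM]; exact hMD'.1
      · rw [Fin.lt_def]; omega
  have hMess : (i, M) ∈ EssSet π := by
    rw [mem_ess_iff π hMD hivel hMvel]
    refine ⟨hsouth, ?_⟩
    by_cases hcase : (M : ℕ) + 1 = (π i : ℕ)
    · exact Or.inl hcase
    · refine Or.inr ?_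
      by_contra hc
      push_neg at hc
      have hd : (i, Msucc) ∈ Diagram π := by
        rw [diag_iff]
        exact ⟨by omega, hc⟩
      have hle := hMmax _ hd
      rw [Fin.le_def] at hle
      omega
  refine ⟨M, hMess, ?_⟩
  intro e he
  by_contra hnee
  have heD : (i, e) ∈ Diagram π := he.1
  have hle : (e : ℕ) ≤ (M : ℕ) := by
    have := hMmax _ heD
    rwa [Fin.le_def] at this
  have hlt : (e : ℕ) < (M : ℕ) := by
    rcases lt_or_eq_of_le hle with h | h
    · exact h
    · exact absurd (Fin.ext h) hnee
  obtain ⟨-, hen⟩ := succ_lt π heD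
  set esucc : Fin n := ⟨(e : ℕ) + 1, hen⟩ with hesucc
  have heD' := (diag_iff π).mp heD
  rw [mem_ess_iff π heD hivel (jsucc := esucc) rfl] at he
  obtain ⟨he1, he2⟩ := he
  have h3 : (e : ℕ) + 1 ≠ (π i : ℕ) := by omega
  have he2' := he2.resolve_left h3
  have hsv : (π (π.symm esucc) : ℕ) = (esucc : ℕ) := symm_apply_val π
  have hne4 : ((π.symm esucc : ℕ)) ≠ (i : ℕ) := by
    intro ee
    have e2 : π.symm esucc = i := Fin.ext ee
    rw [e2] at hsv
    have : (esucc : ℕ) = (e : ℕ) + 1 := rfl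
    omega
  have hsv2 : (π (π.symm e) : ℕ) = (e : ℕ) := symm_apply_val π
  refine no231 π hav (a := π.symm esucc) (b := i) (c := π.symm e) ?_ ?_ ?_ ?_
  · rw [Fin.lt_def]; omega
  · rw [Fin.lt_def]; exact heD'.2
  · rw [Fin.lt_def, hsv2, hsv]
    have : (esucc : ℕ) = (e : ℕ) + 1 := rfl
    omega
  · rw [Fin.lt_def, hsv]
    have : (esucc : ℕ) = (e : ℕ) + 1 := rfl
    omega

/-- Two essential squares in the same column coincide, given 231-avoidance. -/
lemma col_aux (hav : Avoids π pat231) {a b j : Fin n} (hab : a < b)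
    (ha : (a, j) ∈ EssSet π) (hbD : (b, j) ∈ Diagram π) : False := by
  have haD := ha.1
  have haD' := (diag_iff π).mp haD
  have hbD' := (diag_iff π).mp hbD
  have hsv : (π (π.symm j) : ℕ) = (j : ℕ) := symm_apply_val π
  -- first: π b < π a, else 231 directly
  have hba : (π b : ℕ) < (π a : ℕ) := by
    rcases lt_trichotomy ((π a : ℕ)) ((π b : ℕ)) with h | h | h
    · exfalso
      refine no231 π hav (a := a) (b := b) (c := π.symm j) hab ?_ ?_ ?_
      · rw [Fin.lt_def]; exact hbD'.2
      · rw [Fin.lt_def, hsv]; exact haD'.1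
      · rw [Fin.lt_def]; exact h
    · exfalso
      have := π.injective (Fin.ext h)
      subst this
      exact lt_irrefl _ hab
    · exact h
  obtain ⟨han, hjn⟩ := succ_lt π haD
  set asucc : Fin n := ⟨(a : ℕ) + 1, han⟩
  set jsucc : Fin n := ⟨(j : ℕ) + 1, hjn⟩
  rw [mem_ess_iff π haD (isucc := asucc) rfl (jsucc := jsucc) rfl] at ha
  obtain ⟨-, ha2⟩ := ha
  -- j+1 < π a since j+1 ≤ π b < π a
  have hj1 : (j : ℕ) + 1 < (π a : ℕ) := by omega
  have ha2' := ha2.resolve_left (by omega)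
  have hsv2 : (π (π.symm jsucc) : ℕ) = (jsucc : ℕ) := symm_apply_val π
  have hjsv : (jsucc : ℕ) = (j : ℕ) + 1 := rfl
  have hne4 : ((π.symm jsucc : ℕ)) ≠ (a : ℕ) := by
    intro ee
    have e2 : π.symm jsucc = a := Fin.ext ee
    rw [e2] at hsv2
    omega
  refine no231 π hav (a := π.symm jsucc) (b := a) (c := π.symm j) ?_ ?_ ?_ ?_
  · rw [Fin.lt_def]; omega
  · rw [Fin.lt_def]; exact haD'.2
  · rw [Fin.lt_def, hsv, hsv2]; omega
  · rw [Fin.lt_def, hsv2]; omega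
end Helpers

/-- A Schröder permutation avoids 231 iff every row containing a diagram square contains
exactly one element of the essential set, and every column containing a diagram square
contains at most one element of the essential set. -/
theorem avoids_231_iff (n : ℕ) (π : Equiv.Perm (Fin n)) (hπ : Schroeder π) :
    Avoids π pat231 ↔
      ((∀ i : Fin n, (∃ j, (i, j) ∈ Diagram π) → ∃! j : Fin n, (i, j) ∈ EssSet π) ∧
       (∀ j : Fin n, (∃ i, (i, j) ∈ Diagram π) →
          ∀ i i' : Fin n, (i, j) ∈ EssSet π → (i', j) ∈ EssSet π → i = i')) := by
  constructor
  · intro hav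
    refine ⟨row_unique π hav, ?_⟩
    intro j _hj a b ha hb
    rcases lt_trichotomy a b with h | h | h
    · exact absurd (col_aux π hav h ha hb.1) id
    · exact h
    · exact absurd (col_aux π hav h hb ha.1) id
  · rintro ⟨hrow, hcol⟩ hcon
    classical
    obtain ⟨a0, b0, c0, h1, h2, h3, h4⟩ := of_contains231 π hcon
    -- the set of "bad pairs"
    have hb0mem : ∃ a j : Fin n, a < b0 ∧ (a, j) ∈ Diagram π ∧ (b0, j) ∈ Diagram π ∧
        (π a : ℕ) < (π b0 : ℕ) := by
      refine ⟨a0, π c0, h1, ?_, ?_, by rw [← Fin.lt_def]; exact h4⟩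
      · rw [diag_iff]
        refine ⟨by rw [← Fin.lt_def]; exact h3, ?_⟩
        rw [Equiv.symm_apply_apply]
        exact lt_trans h1 h2
      · rw [diag_iff]
        refine ⟨by rw [← Fin.lt_def]; exact lt_trans h3 h4, ?_⟩
        rw [Equiv.symm_apply_apply]
        exact h2
    obtain ⟨b, hbmem, hbmin⟩ :
        ∃ bb ∈ Finset.univ.filter (fun bb : Fin n => ∃ aa jj : Fin n, aa < bb ∧
            (aa, jj) ∈ Diagram π ∧ (bb, jj) ∈ Diagram π ∧ (π aa : ℕ) < (π bb : ℕ)),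
          ∀ x ∈ Finset.univ.filter (fun bb : Fin n => ∃ aa jj : Fin n, aa < bb ∧
            (aa, jj) ∈ Diagram π ∧ (bb, jj) ∈ Diagram π ∧ (π aa : ℕ) < (π bb : ℕ)), bb ≤ x := by
      have hne : (Finset.univ.filter (fun bb : Fin n => ∃ aa jj : Fin n, aa < bb ∧
          (aa, jj) ∈ Diagram π ∧ (bb, jj) ∈ Diagram π ∧ (π aa : ℕ) < (π bb : ℕ))).Nonempty :=
        ⟨b0, Finset.mem_filter.mpr ⟨Finset.mem_univ _, hb0mem⟩⟩
      exact ⟨_, Finset.min'_mem _ hne, fun x hx => Finset.min'_le _ x hx⟩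
    have hbprop := (Finset.mem_filter.mp hbmem).2
    have hbmin' : ∀ x : Fin n, (∃ aa jj : Fin n, aa < x ∧ (aa, jj) ∈ Diagram π ∧
        (x, jj) ∈ Diagram π ∧ (π aa : ℕ) < (π x : ℕ)) → b ≤ x :=
      fun x hx => hbmin x (Finset.mem_filter.mpr ⟨Finset.mem_univ _, hx⟩)
    obtain ⟨a1, j1, ha1, hj1a, hj1b, hv1⟩ := hbprop
    obtain ⟨a, hamem, hamax⟩ :
        ∃ aa ∈ Finset.univ.filter (fun aa : Fin n => ∃ jj : Fin n, aa < b ∧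
            (aa, jj) ∈ Diagram π ∧ (b, jj) ∈ Diagram π ∧ (π aa : ℕ) < (π b : ℕ)),
          ∀ x ∈ Finset.univ.filter (fun aa : Fin n => ∃ jj : Fin n, aa < b ∧
            (aa, jj) ∈ Diagram π ∧ (b, jj) ∈ Diagram π ∧ (π aa : ℕ) < (π b : ℕ)), x ≤ aa := by
      have hne : (Finset.univ.filter (fun aa : Fin n => ∃ jj : Fin n, aa < b ∧
          (aa, jj) ∈ Diagram π ∧ (b, jj) ∈ Diagram π ∧ (π aa : ℕ) < (π b : ℕ))).Nonempty :=
        ⟨a1, Finset.mem_filter.mpr ⟨Finset.mem_univ _, ⟨j1, ha1, hj1a, hj1b, hv1⟩⟩⟩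
      exact ⟨_, Finset.max'_mem _ hne, fun x hx => Finset.le_max' _ x hx⟩
    have haprop := (Finset.mem_filter.mp hamem).2
    have hamax' : ∀ x : Fin n, (∃ jj : Fin n, x < b ∧ (x, jj) ∈ Diagram π ∧
        (b, jj) ∈ Diagram π ∧ (π x : ℕ) < (π b : ℕ)) → x ≤ a :=
      fun x hx => hamax x (Finset.mem_filter.mpr ⟨Finset.mem_univ _, hx⟩)
    obtain ⟨j, hab, hajD, hbjD, hv⟩ := haprop
    have hajD' := (diag_iff π).mp hajD
    have hbjD' := (diag_iff π).mp hbjD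
    have hsvj : (π (π.symm j) : ℕ) = (j : ℕ) := symm_apply_val π
    -- everything strictly between a and b has value < j
    have hbetween : ∀ x : Fin n, a < x → x < b → (π x : ℕ) < (j : ℕ) := by
      intro x hax hxb
      by_contra hc
      push_neg at hc
      have hxj : (π x : ℕ) ≠ (j : ℕ) := by
        intro e
        have e1 : π x = j := Fin.ext e
        have e2 : x = π.symm j := by rw [← e1, Equiv.symm_apply_apply]
        rw [Fin.lt_def] at hxb
        have := hbjD'.2
        rw [← e2] at this
        omega
      have hxD : (x, j) ∈ Diagram π := by
        rw [diag_iff]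
        refine ⟨by omega, ?_⟩
        rw [Fin.lt_def] at hxb
        have := hbjD'.2
        omega
      rcases lt_trichotomy ((π a : ℕ)) ((π x : ℕ)) with h | h | h
      · -- contradicts minimality of b
        have := hbmin' x ⟨a, j, hax, hajD, hxD, h⟩
        exact absurd hxb (not_lt.mpr this)
      · have := π.injective (Fin.ext h)
        subst this
        exact lt_irrefl _ hax
      · -- contradicts maximality of a
        have := hamax' x ⟨j, hxb, hxD, hbjD, by omega⟩
        exact absurd hax (not_lt.mpr this)
    have haval : (a : ℕ) + 1 < n := by
      rw [Fin.lt_def] at hab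
      have := b.2
      omega
    set asucc : Fin n := ⟨(a : ℕ) + 1, haval⟩ with hasucc
    have hasv : (asucc : ℕ) = (a : ℕ) + 1 := rfl
    rcases eq_or_lt_of_le (by rw [Fin.lt_def] at hab; omega : (a : ℕ) + 1 ≤ (b : ℕ)) with
      hcase | hcase
    · -- b = a + 1 : the essential square of row a gives a contradiction
      obtain ⟨e, he, -⟩ := hrow a ⟨j, hajD⟩
      have heD := he.1
      have heD' := (diag_iff π).mp heD
      obtain ⟨-, hen⟩ := succ_lt π heD
      rw [mem_ess_iff π heD (isucc := asucc) rfl (jsucc := ⟨(e : ℕ) + 1, hen⟩) rfl] at he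
      have hba : b = asucc := Fin.ext hcase.symm
      rw [hba] at hv
      have := he.1
      omega
    · -- a + 1 < b
      have hxval := hbetween asucc (by rw [Fin.lt_def]; omega) (by rw [Fin.lt_def]; omega)
      -- max of row a
      obtain ⟨Ma, hMaD, hMamax⟩ := exists_max π a ⟨j, hajD⟩
      have hMaD' := (diag_iff π).mp hMaD
      have hjMa : (j : ℕ) ≤ (Ma : ℕ) := by
        have := hMamax j hajD
        rwa [Fin.le_def] at this
      obtain ⟨-, hMan⟩ := succ_lt π hMaD
      have hMasv : ((⟨(Ma : ℕ) + 1, hMan⟩ : Fin n) : ℕ) = (Ma : ℕ) + 1 := rfl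
      have hMaE : (a, Ma) ∈ EssSet π := by
        rw [mem_ess_iff π hMaD (isucc := asucc) rfl (jsucc := ⟨(Ma : ℕ) + 1, hMan⟩) rfl]
        refine ⟨by omega, ?_⟩
        by_cases hc2 : (Ma : ℕ) + 1 = (π a : ℕ)
        · exact Or.inl hc2
        · refine Or.inr ?_
          by_contra hc
          push_neg at hc
          have hd : (a, (⟨(Ma : ℕ) + 1, hMan⟩ : Fin n)) ∈ Diagram π := by
            rw [diag_iff]
            exact ⟨by omega, hc⟩
          have := hMamax _ hd
          rw [Fin.le_def] at this
          omega
      -- max of row b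
      obtain ⟨Mb, hMbD, hMbmax⟩ := exists_max π b ⟨j, hbjD⟩
      have hMbD' := (diag_iff π).mp hMbD
      obtain ⟨hbn, hMbn⟩ := succ_lt π hMbD
      have hMbsv : ((⟨(Mb : ℕ) + 1, hMbn⟩ : Fin n) : ℕ) = (Mb : ℕ) + 1 := rfl
      set bsucc : Fin n := ⟨(b : ℕ) + 1, hbn⟩ with hbsucc
      obtain ⟨e, heE, -⟩ := hrow b ⟨j, hbjD⟩
      have heD := heE.1
      have heD' := (diag_iff π).mp heD
      obtain ⟨-, hen⟩ := succ_lt π heD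
      rw [mem_ess_iff π heD (isucc := bsucc) rfl (jsucc := ⟨(e : ℕ) + 1, hen⟩) rfl] at heE
      have heMb : (e : ℕ) ≤ (Mb : ℕ) := by
        have := hMbmax e heD
        rwa [Fin.le_def] at this
      have hMbE : (b, Mb) ∈ EssSet π := by
        rw [mem_ess_iff π hMbD (isucc := bsucc) rfl (jsucc := ⟨(Mb : ℕ) + 1, hMbn⟩) rfl]
        refine ⟨by omega, ?_⟩
        by_cases hc2 : (Mb : ℕ) + 1 = (π b : ℕ)
        · exact Or.inl hc2
        · refine Or.inr ?_
          by_contra hc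
          push_neg at hc
          have hd : (b, (⟨(Mb : ℕ) + 1, hMbn⟩ : Fin n)) ∈ Diagram π := by
            rw [diag_iff]
            exact ⟨by omega, hc⟩
          have := hMbmax _ hd
          rw [Fin.le_def] at this
          omega
      -- π⁻¹ Ma > b
      have hsvMa : (π (π.symm Ma) : ℕ) = (Ma : ℕ) := symm_apply_val π
      have hcMa : (b : ℕ) < (π.symm Ma : ℕ) := by
        by_contra hc
        push_neg at hc
        have hne5 : ((π.symm Ma : ℕ)) ≠ (b : ℕ) := by
          intro e5
          have e6 : π.symm Ma = b := Fin.ext e5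
          rw [e6] at hsvMa
          omega
        have := hbetween (π.symm Ma) (by rw [Fin.lt_def]; exact hMaD'.2)
          (by rw [Fin.lt_def]; omega)
        omega
      have hbMaD : (b, Ma) ∈ Diagram π := by
        rw [diag_iff]
        exact ⟨by omega, hcMa⟩
      have hMaMb : (Ma : ℕ) ≤ (Mb : ℕ) := by
        have := hMbmax Ma hbMaD
        rwa [Fin.le_def] at this
      rcases eq_or_lt_of_le hMaMb with hMeq | hMlt
      · -- two essential squares in column Ma
        have hMeq' : Ma = Mb := Fin.ext hMeq
        rw [← hMeq'] at hMbE
        have := hcol Ma ⟨a, hMaD⟩ a b hMaE hMbE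
        rw [this] at hab
        exact lt_irrefl _ hab
      · -- Ma < Mb : Schröder pattern
        have hsvMb : (π (π.symm Mb) : ℕ) = (Mb : ℕ) := symm_apply_val π
        have hπaMb : (π a : ℕ) < (Mb : ℕ) := by
          rcases lt_trichotomy ((π a : ℕ)) ((Mb : ℕ)) with h | h | h
          · exact h
          · exfalso
            have : π.symm Mb = a := by
              rw [show Mb = π a from Fin.ext h.symm, Equiv.symm_apply_apply]
            rw [this] at hsvMb
            rw [Fin.lt_def] at hab
            have := hMbD'.2
            omega
          · exfalso
            have hd : (a, Mb) ∈ Diagram π := by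
              rw [diag_iff]
              refine ⟨h, ?_⟩
              rw [Fin.lt_def] at hab
              have := hMbD'.2
              omega
            have := hMamax Mb hd
            rw [Fin.le_def] at this
            omega
        refine noSchro π hπ (p := a) (q := asucc) (r := b) (s := π.symm Mb) ?_ ?_ ?_ ?_ ?_ ?_
        · rw [Fin.lt_def]; omega
        · rw [Fin.lt_def]; omega
        · rw [Fin.lt_def]; exact hMbD'.2
        · rw [Fin.lt_def, hsvMb]; exact hπaMb
        · rw [Fin.lt_def, hsvMb]; omega
        · rw [Fin.lt_def, hsvMb]; exact hMbD'.1
end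

section
/- Let π ∈ S_n be a permutation, let s be the position with π_s = 1, let d = des(π) be the number of descents of π, and let Des(π) denote the descent set of π. Then π avoids the three patterns 1243, 2143 and 231 if and only if one of the following holds: (i) s > d and Des(π) = {1,2,…,d}; or (ii) s ≤ d, Des(π) = {1,2,…,s−1} ∪ {s+1,s+2,…,d+1}, and moreover π_{s−1} > π_{s+1} whenever 1 < s < n. -/
/-- The 1-based value of `π` at the 1-based position `i+1`; i.e. `pv π i = π_{i+1}` in
one-line notation (and `0` when out of range). -/
def pv {n : ℕ} (π : Equiv.Perm (Fin n)) (i : ℕ) : ℕ :=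
  if h : i < n then (π ⟨i, h⟩ : ℕ) + 1 else 0

/-- The (1-based) descent set of `π`: positions `i ∈ {1, …, n-1}` with `π_i > π_{i+1}`. -/
def DesSet {n : ℕ} (π : Equiv.Perm (Fin n)) : Set ℕ :=
  {i : ℕ | 1 ≤ i ∧ i + 1 ≤ n ∧ pv π i < pv π (i - 1)}

namespace Aux

lemma pv_lt {n : ℕ} (π : Equiv.Perm (Fin n)) {i j : ℕ} (hi : i < n) (hj : j < n) :
    pv π i < pv π j ↔ π ⟨i, hi⟩ < π ⟨j, hj⟩ := by
  simp only [pv, dif_pos hi, dif_pos hj, Fin.lt_def]; omega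

lemma pv_pos {n : ℕ} (π : Equiv.Perm (Fin n)) {i : ℕ} (hi : i < n) : 1 ≤ pv π i := by
  simp [pv, dif_pos hi]

lemma pv_inj {n : ℕ} (π : Equiv.Perm (Fin n)) {i j : ℕ} (hi : i < n) (hj : j < n)
    (h : pv π i = pv π j) : i = j := by
  simp only [pv, dif_pos hi, dif_pos hj, add_left_inj] at h
  have h2 : π ⟨i, hi⟩ = π ⟨j, hj⟩ := Fin.val_injective h
  exact congrArg Fin.val (π.injective h2)

lemma pv_ne {n : ℕ} (π : Equiv.Perm (Fin n)) {i j : ℕ} (hi : i < n) (hj : j < n)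
    (h : i ≠ j) : pv π i ≠ pv π j := fun he => h (pv_inj π hi hj he)

lemma contains231 {n : ℕ} (π : Equiv.Perm (Fin n)) {i j k : ℕ} (hij : i < j) (hjk : j < k)
    (hk : k < n) (h1 : pv π k < pv π i) (h2 : pv π i < pv π j) : Contains π pat231 := by
  have hi : i < n := by omega
  have hj : j < n := by omega
  have h1' := (pv_lt π hk hi).mp h1
  have h2' := (pv_lt π hi hj).mp h2
  have h3' : π ⟨k, hk⟩ < π ⟨j, hj⟩ := h1'.trans h2'
  refine ⟨![⟨i, hi⟩, ⟨j, hj⟩, ⟨k, hk⟩], ?_, ?_⟩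
  · intro a b hab
    fin_cases a <;> fin_cases b <;>
      first
      | exact hij
      | exact hjk
      | exact Nat.lt_trans hij hjk
      | exact absurd hab (by decide)
  · intro a b
    fin_cases a <;> fin_cases b <;> constructor <;> intro h <;>
      first
      | decide
      | exact absurd h (by decide)
      | exact h1'
      | exact h2'
      | exact h3'
      | exact absurd h (lt_asymm h1')
      | exact absurd h (lt_asymm h2')
      | exact absurd h (lt_asymm h3')
      | exact absurd h (lt_irrefl _)

lemma contains1243 {n : ℕ} (π : Equiv.Perm (Fin n)) {i j k l : ℕ} (hij : i < j) (hjk : j < k)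
    (hkl : k < l) (hl : l < n)
    (h1 : pv π i < pv π j) (h2 : pv π j < pv π l) (h3 : pv π l < pv π k) :
    Contains π pat1243 := by
  have hi : i < n := by omega
  have hj : j < n := by omega
  have hk : k < n := by omega
  have e01 := (pv_lt π hi hj).mp h1
  have e13 := (pv_lt π hj hl).mp h2
  have e32 := (pv_lt π hl hk).mp h3
  have e03 : π ⟨i, hi⟩ < π ⟨l, hl⟩ := e01.trans e13
  have e02 : π ⟨i, hi⟩ < π ⟨k, hk⟩ := e03.trans e32
  have e12 : π ⟨j, hj⟩ < π ⟨k, hk⟩ := e13.trans e32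
  refine ⟨![⟨i, hi⟩, ⟨j, hj⟩, ⟨k, hk⟩, ⟨l, hl⟩], ?_, ?_⟩
  · intro a b hab
    fin_cases a <;> fin_cases b <;>
      first
      | exact hij
      | exact hjk
      | exact hkl
      | exact Nat.lt_trans hij hjk
      | exact Nat.lt_trans hjk hkl
      | exact Nat.lt_trans hij (Nat.lt_trans hjk hkl)
      | exact absurd hab (by decide)
  · intro a b
    fin_cases a <;> fin_cases b <;> constructor <;> intro h <;>
      first
      | decide
      | exact absurd h (by decide)
      | exact e01
      | exact e13
      | exact e32
      | exact e03
      | exact e02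
      | exact e12
      | exact absurd h (lt_asymm e01)
      | exact absurd h (lt_asymm e13)
      | exact absurd h (lt_asymm e32)
      | exact absurd h (lt_asymm e03)
      | exact absurd h (lt_asymm e02)
      | exact absurd h (lt_asymm e12)
      | exact absurd h (lt_irrefl _)

lemma contains2143 {n : ℕ} (π : Equiv.Perm (Fin n)) {i j k l : ℕ} (hij : i < j) (hjk : j < k)
    (hkl : k < l) (hl : l < n)
    (h1 : pv π j < pv π i) (h2 : pv π i < pv π l) (h3 : pv π l < pv π k) :
    Contains π pat2143 := by
  have hi : i < n := by omega
  have hj : j < n := by omega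
  have hk : k < n := by omega
  have e10 := (pv_lt π hj hi).mp h1
  have e03 := (pv_lt π hi hl).mp h2
  have e32 := (pv_lt π hl hk).mp h3
  have e13 : π ⟨j, hj⟩ < π ⟨l, hl⟩ := e10.trans e03
  have e02 : π ⟨i, hi⟩ < π ⟨k, hk⟩ := e03.trans e32
  have e12 : π ⟨j, hj⟩ < π ⟨k, hk⟩ := e13.trans e32
  refine ⟨![⟨i, hi⟩, ⟨j, hj⟩, ⟨k, hk⟩, ⟨l, hl⟩], ?_, ?_⟩
  · intro a b hab
    fin_cases a <;> fin_cases b <;>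
      first
      | exact hij
      | exact hjk
      | exact hkl
      | exact Nat.lt_trans hij hjk
      | exact Nat.lt_trans hjk hkl
      | exact Nat.lt_trans hij (Nat.lt_trans hjk hkl)
      | exact absurd hab (by decide)
  · intro a b
    fin_cases a <;> fin_cases b <;> constructor <;> intro h <;>
      first
      | decide
      | exact absurd h (by decide)
      | exact e10
      | exact e03
      | exact e32
      | exact e13
      | exact e02
      | exact e12
      | exact absurd h (lt_asymm e10)
      | exact absurd h (lt_asymm e03)
      | exact absurd h (lt_asymm e32)
      | exact absurd h (lt_asymm e13)
      | exact absurd h (lt_asymm e02)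
      | exact absurd h (lt_asymm e12)
      | exact absurd h (lt_irrefl _)

lemma exists_of_contains231 {n : ℕ} (π : Equiv.Perm (Fin n)) (h : Contains π pat231) :
    ∃ p0 p1 p2 : ℕ, p0 < p1 ∧ p1 < p2 ∧ p2 < n ∧
      pv π p2 < pv π p0 ∧ pv π p0 < pv π p1 := by
  obtain ⟨f, hm, hiff⟩ := h
  refine ⟨f 0, f 1, f 2, hm (by decide), hm (by decide), (f 2).isLt, ?_, ?_⟩
  · exact (pv_lt π (f 2).isLt (f 0).isLt).mpr ((hiff 2 0).mp (by decide))
  · exact (pv_lt π (f 0).isLt (f 1).isLt).mpr ((hiff 0 1).mp (by decide))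

lemma exists_of_contains1243 {n : ℕ} (π : Equiv.Perm (Fin n)) (h : Contains π pat1243) :
    ∃ p0 p1 p2 p3 : ℕ, p0 < p1 ∧ p1 < p2 ∧ p2 < p3 ∧ p3 < n ∧
      pv π p0 < pv π p1 ∧ pv π p1 < pv π p3 ∧ pv π p3 < pv π p2 := by
  obtain ⟨f, hm, hiff⟩ := h
  refine ⟨f 0, f 1, f 2, f 3, hm (by decide), hm (by decide), hm (by decide), (f 3).isLt,
    ?_, ?_, ?_⟩
  · exact (pv_lt π (f 0).isLt (f 1).isLt).mpr ((hiff 0 1).mp (by decide))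
  · exact (pv_lt π (f 1).isLt (f 3).isLt).mpr ((hiff 1 3).mp (by decide))
  · exact (pv_lt π (f 3).isLt (f 2).isLt).mpr ((hiff 3 2).mp (by decide))

lemma exists_of_contains2143 {n : ℕ} (π : Equiv.Perm (Fin n)) (h : Contains π pat2143) :
    ∃ p0 p1 p2 p3 : ℕ, p0 < p1 ∧ p1 < p2 ∧ p2 < p3 ∧ p3 < n ∧
      pv π p1 < pv π p0 ∧ pv π p0 < pv π p3 ∧ pv π p3 < pv π p2 := by
  obtain ⟨f, hm, hiff⟩ := h
  refine ⟨f 0, f 1, f 2, f 3, hm (by decide), hm (by decide), hm (by decide), (f 3).isLt,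
    ?_, ?_, ?_⟩
  · exact (pv_lt π (f 1).isLt (f 0).isLt).mpr ((hiff 1 0).mp (by decide))
  · exact (pv_lt π (f 0).isLt (f 3).isLt).mpr ((hiff 0 3).mp (by decide))
  · exact (pv_lt π (f 3).isLt (f 2).isLt).mpr ((hiff 3 2).mp (by decide))

lemma anti_chain {f : ℕ → ℕ} {a b : ℕ} (h : ∀ i, a < i → i ≤ b → f i < f (i - 1)) :
    ∀ j, j ≤ b → ∀ i, a ≤ i → i < j → f j < f i := by
  intro j
  induction j with
  | zero => intro _ i _ hij; omega
  | succ k ih =>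
    intro hjb i hai hij
    have hk : f (k + 1) < f k := by
      have := h (k + 1) (by omega) hjb
      simpa using this
    rcases Nat.lt_or_ge i k with hik | hik
    · exact hk.trans (ih (by omega) i hai hik)
    · have : i = k := by omega
      subst this; exact hk

lemma mono_chain {f : ℕ → ℕ} {a b : ℕ} (h : ∀ i, a ≤ i → i + 1 ≤ b → f i < f (i + 1)) :
    ∀ j, j ≤ b → ∀ i, a ≤ i → i < j → f i < f j := by
  intro j
  induction j with
  | zero => intro _ i _ hij; omega
  | succ k ih =>
    intro hjb i hai hij
    have hk : f k < f (k + 1) := h k (by omega) hjb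
    rcases Nat.lt_or_ge i k with hik | hik
    · exact (ih (by omega) i hai hik).trans hk
    · have : i = k := by omega
      subst this; exact hk

lemma set_ncard_Icc (a b : ℕ) : (Set.Icc a b).ncard = b + 1 - a := by
  rw [← Finset.coe_Icc, Set.ncard_coe_finset, Nat.card_Icc]

lemma interval_of_closed {S : Set ℕ} {a : ℕ} (ha : 1 ≤ a) (hfin : S.Finite)
    (hlb : ∀ i ∈ S, a ≤ i)
    (hcl : ∀ i ∈ S, ∀ j, a ≤ j → j ≤ i → j ∈ S) :
    S = Set.Icc a (a - 1 + S.ncard) := by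
  rcases S.eq_empty_or_nonempty with rfl | hne
  · rw [Set.ncard_empty]
    ext x
    simp only [Set.mem_empty_iff_false, Set.mem_Icc, false_iff, not_and, not_le]
    omega
  · have hfne : hfin.toFinset.Nonempty := by
      rwa [Set.Finite.toFinset_nonempty]
    set M := hfin.toFinset.max' hfne with hM
    have hMS : M ∈ S := by
      have := hfin.toFinset.max'_mem hfne
      rwa [Set.Finite.mem_toFinset] at this
    have hle : ∀ x ∈ S, x ≤ M := by
      intro x hx
      exact hfin.toFinset.le_max' x (by rwa [Set.Finite.mem_toFinset])
    have hSI : S = Set.Icc a M := by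
      apply subset_antisymm
      · intro i hi; exact ⟨hlb i hi, hle i hi⟩
      · intro j hj; exact hcl M hMS j hj.1 hj.2
    have haM : a ≤ M := hlb M hMS
    rw [hSI, set_ncard_Icc]
    have he : a - 1 + (M + 1 - a) = M := by omega
    rw [he]

lemma mem_desSet {n : ℕ} (π : Equiv.Perm (Fin n)) (i : ℕ) :
    i ∈ DesSet π ↔ 1 ≤ i ∧ i + 1 ≤ n ∧ pv π i < pv π (i - 1) := Iff.rfl

end Aux

/-- Characterization of permutations avoiding 1243, 2143 and 231 via the descent set:
with `π_s = 1` and `d = des(π)`, either `s > d` and `Des(π) = {1,…,d}`, or `s ≤ d`,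
`Des(π) = {1,…,s-1} ∪ {s+1,…,d+1}`, and `π_{s-1} > π_{s+1}` whenever `1 < s < n`. -/
theorem avoid_1243_2143_231_iff_descents (n : ℕ) (π : Equiv.Perm (Fin n)) (s : ℕ)
    (hs1 : 1 ≤ s) (hsn : s ≤ n) (hsval : pv π (s - 1) = 1)
    (d : ℕ) (hd : d = (DesSet π).ncard) :
    (Avoids π pat1243 ∧ Avoids π pat2143 ∧ Avoids π pat231) ↔
      ((d < s ∧ DesSet π = Set.Icc 1 d) ∨
       (s ≤ d ∧ DesSet π = Set.Icc 1 (s - 1) ∪ Set.Icc (s + 1) (d + 1) ∧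
         (1 < s → s < n → pv π s < pv π (s - 2)))) := by
  obtain ⟨t, rfl⟩ : ∃ t, s = t + 1 := ⟨s - 1, by omega⟩
  have ht : t < n := by omega
  have hpt : pv π t = 1 := by simpa using hsval
  have hpv1 : ∀ i, i < n → i ≠ t → 1 < pv π i := by
    intro i hi hne
    have h1 := Aux.pv_pos π hi
    have h2 := Aux.pv_ne π hi ht hne
    omega
  constructor
  · rintro ⟨hav1243, hav2143, hav231⟩
    have hpre : ∀ i, 1 ≤ i → i ≤ t → i ∈ DesSet π := by
      intro i h1 h2
      refine ⟨h1, by omega, ?_⟩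
      by_contra hcon
      have hlt : pv π (i - 1) < pv π i := by
        have := Aux.pv_ne π (show i - 1 < n by omega) (show i < n by omega) (by omega)
        omega
      rcases Nat.lt_or_ge i t with hit | hit
      · exact hav231 (Aux.contains231 π (show i - 1 < i by omega) hit ht
          (by rw [hpt]; exact hpv1 (i - 1) (by omega) (by omega)) hlt)
      · have hie : i = t := by omega
        subst hie
        have := Aux.pv_pos π (show i - 1 < n by omega)
        omega
    have hsuf : ∀ a b, t + 1 ≤ a → a < b → b + 1 < n →
        pv π a < pv π (a + 1) → pv π (b + 1) < pv π b → False := by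
      intro a b hta hab hbn hasc hdesc
      rcases Nat.lt_or_ge (pv π a) (pv π (b + 1)) with hc | hc
      · exact hav1243 (Aux.contains1243 π (show t < a by omega) hab (Nat.lt_succ_self b) hbn
          (by rw [hpt]; exact hpv1 a (by omega) (by omega)) hc hdesc)
      · have hc' : pv π (b + 1) < pv π a := by
          have := Aux.pv_ne π (show a < n by omega) (show b + 1 < n by omega) (by omega)
          omega
        exact hav231 (Aux.contains231 π (Nat.lt_succ_self a)
          (show a + 1 < b + 1 by omega) hbn hc' hasc)
    have hpk : 1 ≤ t → t + 2 < n → pv π (t + 2) < pv π (t + 1) →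
        pv π (t + 1) < pv π (t - 1) := by
      intro ht1 htn hdesc
      by_contra hcon
      have hlt : pv π (t - 1) < pv π (t + 1) := by
        have := Aux.pv_ne π (show t - 1 < n by omega) (show t + 1 < n by omega) (by omega)
        omega
      rcases Nat.lt_or_ge (pv π (t - 1)) (pv π (t + 2)) with hc | hc
      · exact hav2143 (Aux.contains2143 π (show t - 1 < t by omega) (Nat.lt_succ_self t)
          (Nat.lt_succ_self (t + 1)) htn
          (by rw [hpt]; exact hpv1 (t - 1) (by omega) (by omega)) hc hdesc)
      · have hc' : pv π (t + 2) < pv π (t - 1) := by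
          have := Aux.pv_ne π (show t + 2 < n by omega) (show t - 1 < n by omega) (by omega)
          omega
        exact hav231 (Aux.contains231 π (show t - 1 < t + 1 by omega)
          (Nat.lt_succ_self (t + 1)) htn hc' hlt)
    set K : Set ℕ := {i | t + 2 ≤ i ∧ i ∈ DesSet π} with hKdef
    have hDfin : (DesSet π).Finite := by
      apply Set.Finite.subset (Set.finite_Icc 1 n)
      intro i hi
      obtain ⟨h1, h2, _⟩ := hi
      exact Set.mem_Icc.mpr ⟨h1, by omega⟩
    have hKfin : K.Finite := hDfin.subset (fun i hi => hi.2)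
    have hsplit : DesSet π = Set.Icc 1 t ∪ K := by
      ext i
      simp only [Set.mem_union, Set.mem_Icc, hKdef, Set.mem_setOf_eq]
      constructor
      · intro hi
        obtain ⟨hia, hib, hic⟩ := hi
        rcases Nat.lt_or_ge i (t + 2) with h2 | h2
        · left
          refine ⟨hia, ?_⟩
          by_contra hgt
          have hie : i = t + 1 := by omega
          subst hie
          have h3 : pv π (t + 1) < pv π t := hic
          have := Aux.pv_pos π (show t + 1 < n by omega)
          omega
        · right; exact ⟨h2, hia, hib, hic⟩
      · intro hi
        rcases hi with ⟨h1, h2⟩ | h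
        · exact hpre i h1 h2
        · exact h.2
    have hKcl : ∀ i ∈ K, ∀ j, t + 2 ≤ j → j ≤ i → j ∈ K := by
      intro i hi j hj1 hj2
      obtain ⟨hit, _, hin, hiv⟩ := hi
      refine ⟨hj1, by omega, by omega, ?_⟩
      by_contra hcon
      have hasc : pv π (j - 1) < pv π j := by
        have := Aux.pv_ne π (show j - 1 < n by omega) (show j < n by omega) (by omega)
        omega
      rcases Nat.lt_or_ge j i with hji | hji
      · apply hsuf (j - 1) (i - 1) (by omega) (by omega) (by omega)
        · have e : j - 1 + 1 = j := by omega
          rw [e]; exact hasc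
        · have e : i - 1 + 1 = i := by omega
          rw [e]; exact hiv
      · have hje : j = i := by omega
        subst hje
        exact hcon hiv
    have hKI := Aux.interval_of_closed (show 1 ≤ t + 2 by omega) hKfin
      (fun i hi => hi.1) hKcl
    rw [show t + 2 - 1 = t + 1 from rfl] at hKI
    have hdisj : Disjoint (Set.Icc 1 t) K := by
      rw [Set.disjoint_left]
      intro i hi1 hi2
      have h1 := hi2.1
      have h2 := (Set.mem_Icc.mp hi1).2
      omega
    have hdcalc : d = t + K.ncard := by
      rw [hd, hsplit, Set.ncard_union_eq hdisj (Set.finite_Icc 1 t) hKfin,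
        Aux.set_ncard_Icc]
      omega
    rcases Nat.eq_zero_or_pos K.ncard with hk0 | hk1
    · left
      refine ⟨by omega, ?_⟩
      rw [hsplit, hKI, hk0]
      have h1 : Set.Icc (t + 2) (t + 1 + 0) = (∅ : Set ℕ) := by
        ext x
        simp only [Set.mem_Icc, Set.mem_empty_iff_false, iff_false, not_and, not_le]
        omega
      rw [h1, Set.union_empty, show t = d by omega]
    · right
      refine ⟨by omega, ?_, ?_⟩
      · rw [hsplit, hKI, show t + 1 - 1 = t from rfl, show d + 1 = t + 1 + K.ncard by omega,
          show t + 1 + 1 = t + 2 from rfl]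
      · intro hs1' hsn'
        rw [show t + 1 - 2 = t - 1 by omega]
        have ht2K : t + 2 ∈ K := by
          rw [hKI]
          exact Set.mem_Icc.mpr ⟨le_refl _, by omega⟩
        obtain ⟨_, _, hn2, hv2⟩ := ht2K
        have hv2' : pv π (t + 2) < pv π (t + 1) := hv2
        exact hpk (by omega) (by omega) hv2'
  · rintro (⟨hds, hset⟩ | ⟨hsd, hset, hineq⟩)
    · -- case (i)
      have htd : t = d := by
        rcases Nat.lt_trichotomy t d with h | h | h
        · exfalso
          have hmem : t + 1 ∈ DesSet π := by
            rw [hset]; exact Set.mem_Icc.mpr ⟨by omega, by omega⟩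
          obtain ⟨_, hn2, hv2⟩ := hmem
          have hv2' : pv π (t + 1) < pv π t := hv2
          have := Aux.pv_pos π (show t + 1 < n by omega)
          omega
        · exact h
        · exfalso
          have hmem : t ∈ DesSet π := by
            refine ⟨by omega, by omega, ?_⟩
            rw [hpt]
            exact hpv1 (t - 1) (by omega) (by omega)
          rw [hset] at hmem
          have := (Set.mem_Icc.mp hmem).2
          omega
      have hanti : ∀ j, j ≤ t → ∀ i, 0 ≤ i → i < j → pv π j < pv π i := by
        apply Aux.anti_chain
        intro i h1 h2
        have hmem : i ∈ DesSet π := by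
          rw [hset]; exact Set.mem_Icc.mpr ⟨h1, by omega⟩
        exact hmem.2.2
      have hmono : ∀ j, j ≤ n - 1 → ∀ i, t ≤ i → i < j → pv π i < pv π j := by
        apply Aux.mono_chain
        intro i h1 h2
        have hnm : i + 1 ∉ DesSet π := by
          rw [hset]
          intro hmem
          have := (Set.mem_Icc.mp hmem).2
          omega
        have hv : ¬ pv π (i + 1) < pv π i := fun hvv => hnm ⟨by omega, by omega, hvv⟩
        have := Aux.pv_ne π (show i < n by omega) (show i + 1 < n by omega) (by omega)
        omega
      refine ⟨?_, ?_, ?_⟩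
      · intro hcont
        obtain ⟨p0, p1, p2, p3, h01, h12, h23, h3n, a1, a2, a3⟩ :=
          Aux.exists_of_contains1243 π hcont
        rcases Nat.lt_or_ge t p2 with h | h
        · have := hmono p3 (by omega) p2 (by omega) h23; omega
        · have := hanti p2 h p1 (by omega) h12; omega
      · intro hcont
        obtain ⟨p0, p1, p2, p3, h01, h12, h23, h3n, a1, a2, a3⟩ :=
          Aux.exists_of_contains2143 π hcont
        rcases Nat.lt_or_ge t p2 with h | h
        · have := hmono p3 (by omega) p2 (by omega) h23; omega
        · have := hanti p2 h p1 (by omega) h12; omega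
      · intro hcont
        obtain ⟨p0, p1, p2, h01, h12, h2n, a1, a2⟩ := Aux.exists_of_contains231 π hcont
        rcases Nat.lt_or_ge t p1 with h | h
        · have := hmono p2 (by omega) p1 (by omega) h12; omega
        · have := hanti p1 h p0 (by omega) h01; omega
    · -- case (ii)
      have hsd' : t + 1 ≤ d := hsd
      have hd1mem : d + 1 ∈ DesSet π := by
        rw [hset]; right; exact Set.mem_Icc.mpr ⟨by omega, le_refl _⟩
      have hd2n : d + 2 ≤ n := hd1mem.2.1
      have hA : ∀ j, j ≤ t → ∀ i, 0 ≤ i → i < j → pv π j < pv π i := by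
        apply Aux.anti_chain
        intro i h1 h2
        have hmem : i ∈ DesSet π := by
          rw [hset]; left; exact Set.mem_Icc.mpr ⟨h1, by omega⟩
        exact hmem.2.2
      have hB : ∀ j, j ≤ d + 1 → ∀ i, t + 1 ≤ i → i < j → pv π j < pv π i := by
        apply Aux.anti_chain
        intro i h1 h2
        have hmem : i ∈ DesSet π := by
          rw [hset]; right; exact Set.mem_Icc.mpr ⟨by omega, h2⟩
        exact hmem.2.2
      have hC : ∀ j, j ≤ n - 1 → ∀ i, d + 1 ≤ i → i < j → pv π i < pv π j := by
        apply Aux.mono_chain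
        intro i h1 h2
        have hnm : i + 1 ∉ DesSet π := by
          rw [hset]
          intro hmem
          rcases hmem with hm | hm <;>
            · have := (Set.mem_Icc.mp hm).2
              omega
        have hv : ¬ pv π (i + 1) < pv π i := fun hvv => hnm ⟨by omega, by omega, hvv⟩
        have := Aux.pv_ne π (show i < n by omega) (show i + 1 < n by omega) (by omega)
        omega
      have hpeak : 1 ≤ t → pv π (t + 1) < pv π (t - 1) := by
        intro h1
        have h2 := hineq (by omega) (by omega)
        rwa [show t + 1 - 2 = t - 1 by omega] at h2
      have hAB : ∀ p q, p < t → t + 1 ≤ q → q ≤ d + 1 → pv π q < pv π p := by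
        intro p q hp hq1 hq2
        have h1 : pv π q ≤ pv π (t + 1) := by
          rcases Nat.eq_or_lt_of_le hq1 with he | hlt2
          · rw [← he]
          · exact le_of_lt (hB q hq2 (t + 1) (le_refl _) hlt2)
        have h2 : pv π (t + 1) < pv π (t - 1) := hpeak (by omega)
        have h3 : pv π (t - 1) ≤ pv π p := by
          rcases Nat.eq_or_lt_of_le (show p ≤ t - 1 by omega) with he | hlt2
          · rw [he]
          · exact le_of_lt (hA (t - 1) (by omega) p (by omega) hlt2)
        omega
      have refute4 : ∀ p0 p1 p2 p3 : ℕ, p0 < p1 → p1 < p2 → p2 < p3 → p3 < n →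
          pv π p0 < pv π p3 → pv π p1 < pv π p3 → pv π p3 < pv π p2 → False := by
        intro p0 p1 p2 p3 h01 h12 h23 h3n h03 h13 h32
        rcases Nat.lt_or_ge (d + 1) p2 with h | h
        · have := hC p3 (by omega) p2 (by omega) h23; omega
        rcases Nat.lt_or_ge p2 (t + 1) with h' | h'
        · have := hA p2 (by omega) p1 (by omega) h12; omega
        · rcases Nat.lt_trichotomy p1 t with hp | hp | hp
          · have := hAB p1 p2 hp h' h; omega
          · have := hAB p0 p2 (by omega) h' h; omega
          · have := hB p2 h p1 (by omega) h12; omega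
      refine ⟨?_, ?_, ?_⟩
      · intro hcont
        obtain ⟨p0, p1, p2, p3, h01, h12, h23, h3n, a1, a2, a3⟩ :=
          Aux.exists_of_contains1243 π hcont
        exact refute4 p0 p1 p2 p3 h01 h12 h23 h3n (by omega) a2 a3
      · intro hcont
        obtain ⟨p0, p1, p2, p3, h01, h12, h23, h3n, a1, a2, a3⟩ :=
          Aux.exists_of_contains2143 π hcont
        exact refute4 p0 p1 p2 p3 h01 h12 h23 h3n a2 (by omega) a3
      · intro hcont
        obtain ⟨p0, p1, p2, h01, h12, h2n, a1, a2⟩ := Aux.exists_of_contains231 π hcont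
        rcases Nat.lt_or_ge (d + 1) p1 with h | h
        · have := hC p2 (by omega) p1 (by omega) h12; omega
        rcases Nat.lt_or_ge p1 (t + 1) with h' | h'
        · have := hA p1 (by omega) p0 (by omega) h01; omega
        · rcases Nat.lt_trichotomy p0 t with hp | hp | hp
          · have := hAB p0 p1 hp h' h; omega
          · have h1 := Aux.pv_pos π (show p2 < n by omega)
            have h2 : pv π p0 = 1 := by rw [hp]; exact hpt
            omega
          · have := hB p1 h p0 (by omega) h01; omega
end

section
/- For all n ≥ 3, the number of permutations in S_n that avoid the patterns 1243, 2143 and 231 equals (n+2)·2^{n−3}; equivalently, for n ≥ 2 this number equals 2^{n−1} + (n−2)·2^{n−3} (interpreting the second term as 0 when n = 2). -/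
open List

section ListLemmas

variable {α : Type*}

theorem List.ofFn_sublist_ofFn_iff {k n : ℕ} (v : Fin k → α) (g : Fin n → α) :
    ofFn v <+ ofFn g ↔ ∃ f : Fin k → Fin n, StrictMono f ∧ v = g ∘ f := by
  constructor
  · intro h
    obtain ⟨e, he⟩ := sublist_iff_exists_fin_orderEmbedding_get_eq.1 h
    refine ⟨fun i => Fin.cast length_ofFn (e (Fin.cast length_ofFn.symm i)),
      fun i j hij => by simpa using hij, funext fun i => ?_⟩
    simpa [Fin.cast] using he (Fin.cast length_ofFn.symm i)
  · rintro ⟨f, hf, rfl⟩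
    have hpw : ((ofFn f).map (Fin.cast (length_ofFn (f := g)).symm)).Pairwise (· < ·) := by
      simpa [List.pairwise_map, List.pairwise_ofFn] using fun i j hij => hf hij
    simpa [List.map_ofFn, Function.comp_def] using List.map_getElem_sublist hpw

theorem List.Sublist.of_concat_of_ne {a b : α} {l l' : List α} (hab : a ≠ b)
    (h : l ++ [a] <+ l' ++ [b]) : l ++ [a] <+ l' := by
  rw [← reverse_sublist] at h ⊢
  rw [reverse_append, reverse_append] at h
  simpa using h.of_cons_of_ne hab

theorem List.cons_perm_append_singleton_iff {a : α} {u l : List α} :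
    a :: u ~ l ++ [a] ↔ u ~ l := by
  refine ⟨fun h => (perm_cons a).1 (h.trans (perm_append_singleton a l)), fun h => ?_⟩
  exact ((perm_cons a).2 h).trans (perm_append_singleton a l).symm

theorem List.triple_sublist_append_cons {a b M : α} {A B : List α} (ha : a ∈ A) (hb : b ∈ B) :
    [a, M, b] <+ A ++ M :: B :=
  (singleton_sublist.2 ha).append ((singleton_sublist.2 hb).cons_cons M)

variable [Preorder α] {s w : List α} {x y M : α}

theorem List.Sublist.of_concat_of_lt_max (h : s ++ [y] <+ w ++ [M]) (hx : x ∈ s) (hyx : y < x)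
    (hw : ∀ z ∈ w, z < M) : s ++ [y] <+ w := by
  refine h.of_concat_of_ne fun hyM => ?_
  rcases mem_append.1 (h.subset (mem_append_left _ hx)) with hxw | hxM
  · exact lt_asymm (hyM ▸ hyx) (hw x hxw)
  · exact lt_irrefl x (by simp_all)

theorem List.Sublist.of_cons_of_lt_max (h : x :: s <+ M :: w) (hy : y ∈ s) (hxy : x < y)
    (hw : ∀ z ∈ w, z < M) : x :: s <+ w := by
  refine h.of_cons_of_ne fun hxM => ?_
  rcases mem_cons.1 (h.subset (mem_cons_of_mem _ hy)) with hyM | hyw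
  · exact lt_irrefl x (by simp_all)
  · exact lt_asymm (hxM ▸ hxy) (hw y hyw)

end ListLemmas

section PermRange

variable {u : List ℕ} {n : ℕ}

theorem lt_of_perm_range (hu : u ~ range n) : ∀ z ∈ u, z < n :=
  fun _ hz => mem_range.1 (hu.subset hz)

theorem ne_nil_of_perm_range_succ (hu : u ~ range (n + 1)) : u ≠ [] :=
  ne_nil_of_length_pos (by simp [hu.length_eq])

theorem append_singleton_perm_range_succ_iff : u ++ [n] ~ range (n + 1) ↔ u ~ range n := by
  rw [range_succ, perm_append_right_iff]

theorem cons_perm_range_succ_iff : n :: u ~ range (n + 1) ↔ u ~ range n := by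
  rw [range_succ, cons_perm_append_singleton_iff]

theorem zero_cons_cons_map_succ_perm_range_iff {C : List ℕ} {m : ℕ} :
    0 :: (m + 2) :: C.map Nat.succ ~ range (m + 3) ↔ C ~ range (m + 1) := by
  rw [range_succ_eq_map, perm_cons, range_succ, map_append, map_singleton,
    cons_perm_append_singleton_iff, map_perm_map_iff Nat.succ_injective]

end PermRange

section OneLine

def oneLine {n : ℕ} (π : Equiv.Perm (Fin n)) : List ℕ := ofFn fun i => (π i : ℕ)

def permWords (P : List ℕ → Prop) (n : ℕ) : Set (List ℕ) := {w | w ~ range n ∧ P w}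

theorem contains_iff_exists_strictMono {n k : ℕ} (π : Equiv.Perm (Fin n))
    (τ : Equiv.Perm (Fin k)) :
    Contains π τ ↔
      ∃ f : Fin k → Fin n, StrictMono f ∧ StrictMono (π ∘ f ∘ τ.symm) := by
  refine exists_congr fun f => and_congr_right fun _ => ⟨fun h x y hxy => ?_, fun h a b => ?_⟩
  · simpa using (h (τ.symm x) (τ.symm y)).1 (by simpa using hxy)
  · simpa using (h.lt_iff_lt (a := τ a) (b := τ b)).symm

theorem contains_iff_exists_ofFn_sublist {n k : ℕ} (π : Equiv.Perm (Fin n))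
    (τ : Equiv.Perm (Fin k)) :
    Contains π τ ↔
      ∃ v : Fin k → ℕ, ofFn v <+ oneLine π ∧ StrictMono (v ∘ τ.symm) := by
  simp only [contains_iff_exists_strictMono, oneLine, ofFn_sublist_ofFn_iff]
  constructor
  · rintro ⟨f, hf, hmono⟩
    exact ⟨_, ⟨f, hf, rfl⟩, fun x y hxy => hmono hxy⟩
  · rintro ⟨v, ⟨f, hf, rfl⟩, hmono⟩
    exact ⟨f, hf, fun x y hxy => hmono hxy⟩

variable {n : ℕ}

theorem oneLine_injective : Function.Injective (oneLine (n := n)) := fun _ _ h =>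
  Equiv.ext fun i => Fin.ext (congrFun (ofFn_inj.1 h) i)

theorem oneLine_perm_range (π : Equiv.Perm (Fin n)) : oneLine π ~ range n := by
  simpa [oneLine, ofFn_eq_map, Function.comp_def, List.map_coe_finRange_eq_range] using
    π.ofFn_comp_perm (fun i : Fin n => (i : ℕ))

theorem exists_oneLine_eq {w : List ℕ} (hw : w ~ range n) :
    ∃ π : Equiv.Perm (Fin n), oneLine π = w := by
  have hlen : w.length = n := by simpa using hw.length_eq
  have hlt : ∀ i (hi : i < w.length), w[i] < n :=
    fun _ hi => lt_of_perm_range hw _ (getElem_mem hi)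
  let f : Fin n → Fin n := fun i => ⟨w[i], hlt i (by omega)⟩
  have hf : Function.Injective f := fun i j h =>
    Fin.ext ((hw.nodup_iff.2 nodup_range).getElem_inj_iff.1 (congrArg Fin.val h))
  exact ⟨Equiv.ofBijective f hf.bijective_of_finite, ext_getElem (by simp [oneLine, hlen])
    fun i _ _ => by simp [oneLine, f]⟩

theorem permWords_finite (P : List ℕ → Prop) (n : ℕ) : (permWords P n).Finite :=
  (range n).permutations.toFinset.finite_toSet.subset fun _ hw => by simpa using hw.1

theorem card_subtype_oneLine_eq_ncard (P : List ℕ → Prop) :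
    Nat.card {π : Equiv.Perm (Fin n) // P (oneLine π)} = (permWords P n).ncard := by
  have : permWords P n = oneLine '' {π : Equiv.Perm (Fin n) | P (oneLine π)} := by
    ext w
    constructor
    · rintro ⟨hw, hP⟩
      obtain ⟨π, rfl⟩ := exists_oneLine_eq hw
      exact ⟨π, hP, rfl⟩
    · rintro ⟨π, hP, rfl⟩
      exact ⟨oneLine_perm_range π, hP⟩
  rw [this, Set.ncard_image_of_injective _ oneLine_injective, ← Nat.card_coe_set_eq]
  rfl

end OneLine

section Patterns

def Has1243 (w : List ℕ) : Prop := ∃ a b c d, [a, b, c, d] <+ w ∧ a < b ∧ b < d ∧ d < c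

def Has2143 (w : List ℕ) : Prop := ∃ a b c d, [a, b, c, d] <+ w ∧ b < a ∧ a < d ∧ d < c

def Has231 (w : List ℕ) : Prop := ∃ a b c, [a, b, c] <+ w ∧ c < a ∧ a < b

def Has132 (w : List ℕ) : Prop := ∃ a b c, [a, b, c] <+ w ∧ a < c ∧ c < b

theorem contains_pat1243_iff {n : ℕ} (π : Equiv.Perm (Fin n)) :
    Contains π pat1243 ↔ Has1243 (oneLine π) := by
  have : ⇑pat1243.symm = ![0, 1, 3, 2] := by decide
  simp [contains_iff_exists_ofFn_sublist, this, Fin.exists_fin_succ_pi,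
    Fin.strictMono_iff_lt_succ, Fin.forall_fin_succ, Has1243]

theorem contains_pat2143_iff {n : ℕ} (π : Equiv.Perm (Fin n)) :
    Contains π pat2143 ↔ Has2143 (oneLine π) := by
  have : ⇑pat2143.symm = ![1, 0, 3, 2] := by decide
  simp [contains_iff_exists_ofFn_sublist, this, Fin.exists_fin_succ_pi,
    Fin.strictMono_iff_lt_succ, Fin.forall_fin_succ, Has2143]

theorem contains_pat231_iff {n : ℕ} (π : Equiv.Perm (Fin n)) :
    Contains π pat231 ↔ Has231 (oneLine π) := by
  have : ⇑pat231.symm = ![2, 0, 1] := by decide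
  simp [contains_iff_exists_ofFn_sublist, this, Fin.exists_fin_succ_pi,
    Fin.strictMono_iff_lt_succ, Fin.forall_fin_succ, Has231]

variable {u w : List ℕ}

theorem Has1243.mono (h : u <+ w) : Has1243 u → Has1243 w
  | ⟨a, b, c, d, hs, hab⟩ => ⟨a, b, c, d, hs.trans h, hab⟩

theorem Has2143.mono (h : u <+ w) : Has2143 u → Has2143 w
  | ⟨a, b, c, d, hs, hab⟩ => ⟨a, b, c, d, hs.trans h, hab⟩

theorem Has231.mono (h : u <+ w) : Has231 u → Has231 w
  | ⟨a, b, c, hs, hab⟩ => ⟨a, b, c, hs.trans h, hab⟩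

theorem Has132.mono (h : u <+ w) : Has132 u → Has132 w
  | ⟨a, b, c, hs, hab⟩ => ⟨a, b, c, hs.trans h, hab⟩

theorem Has1243.has132 : Has1243 w → Has132 w
  | ⟨_, b, c, d, hs, _, hbd, hdc⟩ => ⟨b, c, d, (sublist_cons_self _ _).trans hs, hbd, hdc⟩

theorem Has2143.has132 : Has2143 w → Has132 w
  | ⟨a, _, c, d, hs, _, had, hdc⟩ =>
    ⟨a, c, d, ((sublist_cons_self _ _).cons_cons a).trans hs, had, hdc⟩

theorem has1243_zero_cons_iff (hw : ∀ z ∈ w, 0 < z) : Has1243 (0 :: w) ↔ Has132 w := by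
  refine ⟨fun ⟨a, b, c, d, hs, hab, hbd, hdc⟩ => ?_, fun ⟨a, b, c, hs, hac, hcb⟩ =>
    ⟨0, a, b, c, hs.cons_cons 0, hw a (hs.subset (by simp)), hac, hcb⟩⟩
  rcases Nat.eq_zero_or_pos a with rfl | ha
  · exact ⟨b, c, d, cons_sublist_cons.1 hs, hbd, hdc⟩
  · exact Has1243.has132 ⟨a, b, c, d, hs.of_cons_of_ne ha.ne', hab, hbd, hdc⟩

theorem has2143_zero_cons_iff : Has2143 (0 :: w) ↔ Has2143 w :=
  ⟨fun ⟨a, b, c, d, hs, hba, had, hdc⟩ =>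
    ⟨a, b, c, d, hs.of_cons_of_ne (by omega), hba, had, hdc⟩,
   Has2143.mono (sublist_cons_self _ _)⟩

theorem has231_zero_cons_iff : Has231 (0 :: w) ↔ Has231 w :=
  ⟨fun ⟨a, b, c, hs, hca, hab⟩ => ⟨a, b, c, hs.of_cons_of_ne (by omega), hca, hab⟩,
    Has231.mono (sublist_cons_self _ _)⟩

section NewMaximum

variable {M : ℕ} (hw : ∀ z ∈ w, z < M)
include hw

theorem has1243_append_max_iff : Has1243 (w ++ [M]) ↔ Has1243 w :=
  ⟨fun ⟨a, b, c, d, hs, hab, hbd, hdc⟩ =>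
    ⟨a, b, c, d, hs.of_concat_of_lt_max (s := [a, b, c]) (by simp) hdc hw, hab, hbd, hdc⟩,
   Has1243.mono (sublist_append_left _ _)⟩

theorem has1243_max_cons_iff : Has1243 (M :: w) ↔ Has1243 w :=
  ⟨fun ⟨a, b, c, d, hs, hab, hbd, hdc⟩ =>
    ⟨a, b, c, d, hs.of_cons_of_lt_max (by simp) hab hw, hab, hbd, hdc⟩,
   Has1243.mono (sublist_cons_self _ _)⟩

theorem has2143_append_max_iff : Has2143 (w ++ [M]) ↔ Has2143 w :=
  ⟨fun ⟨a, b, c, d, hs, hba, had, hdc⟩ =>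
    ⟨a, b, c, d, hs.of_concat_of_lt_max (s := [a, b, c]) (by simp) hdc hw, hba, had, hdc⟩,
   Has2143.mono (sublist_append_left _ _)⟩

theorem has2143_max_cons_iff : Has2143 (M :: w) ↔ Has2143 w :=
  ⟨fun ⟨a, b, c, d, hs, hba, had, hdc⟩ =>
    ⟨a, b, c, d, hs.of_cons_of_lt_max (y := c) (by simp) (had.trans hdc) hw, hba, had, hdc⟩,
   Has2143.mono (sublist_cons_self _ _)⟩

theorem has231_append_max_iff : Has231 (w ++ [M]) ↔ Has231 w :=
  ⟨fun ⟨a, b, c, hs, hca, hab⟩ =>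
    ⟨a, b, c, hs.of_concat_of_lt_max (s := [a, b]) (by simp) hca hw, hca, hab⟩,
   Has231.mono (sublist_append_left _ _)⟩

theorem has231_max_cons_iff : Has231 (M :: w) ↔ Has231 w :=
  ⟨fun ⟨a, b, c, hs, hca, hab⟩ =>
    ⟨a, b, c, hs.of_cons_of_lt_max (by simp) hab hw, hca, hab⟩,
   Has231.mono (sublist_cons_self _ _)⟩

theorem has132_append_max_iff : Has132 (w ++ [M]) ↔ Has132 w :=
  ⟨fun ⟨a, b, c, hs, hac, hcb⟩ =>
    ⟨a, b, c, hs.of_concat_of_lt_max (s := [a, b]) (by simp) hcb hw, hac, hcb⟩,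
   Has132.mono (sublist_append_left _ _)⟩

theorem has132_max_cons_iff : Has132 (M :: w) ↔ Has132 w :=
  ⟨fun ⟨a, b, c, hs, hac, hcb⟩ =>
    ⟨a, b, c, hs.of_cons_of_lt_max (by simp) (hac.trans hcb) hw, hac, hcb⟩,
   Has132.mono (sublist_cons_self _ _)⟩

end NewMaximum

section StrictMonoMap

variable {f : ℕ → ℕ} (hf : StrictMono f)
include hf

theorem has231_map_iff : Has231 (w.map f) ↔ Has231 w := by
  refine ⟨fun ⟨a, b, c, hs, hca, hab⟩ => ?_, fun ⟨a, b, c, hs, hca, hab⟩ =>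
    ⟨f a, f b, f c, hs.map f, hf hca, hf hab⟩⟩
  obtain ⟨l, hl, hfl⟩ := sublist_map_iff.1 hs
  match l, hfl with
  | [x, y, z], hfl =>
    simp only [map_cons, map_nil, cons.injEq] at hfl
    obtain ⟨rfl, rfl, rfl, -⟩ := hfl
    exact ⟨x, y, z, hl, hf.lt_iff_lt.1 hca, hf.lt_iff_lt.1 hab⟩

theorem has132_map_iff : Has132 (w.map f) ↔ Has132 w := by
  refine ⟨fun ⟨a, b, c, hs, hac, hcb⟩ => ?_, fun ⟨a, b, c, hs, hac, hcb⟩ =>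
    ⟨f a, f b, f c, hs.map f, hf hac, hf hcb⟩⟩
  obtain ⟨l, hl, hfl⟩ := sublist_map_iff.1 hs
  match l, hfl with
  | [x, y, z], hfl =>
    simp only [map_cons, map_nil, cons.injEq] at hfl
    obtain ⟨rfl, rfl, rfl, -⟩ := hfl
    exact ⟨x, y, z, hl, hf.lt_iff_lt.1 hac, hf.lt_iff_lt.1 hcb⟩

end StrictMonoMap

theorem lt_of_mem_of_mem_of_not_has231 {A B : List ℕ} {M x y : ℕ}
    (hw : A ++ M :: B ~ range (M + 1)) (h : ¬Has231 (A ++ M :: B)) (hx : x ∈ A) (hy : y ∈ B) :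
    x < y ∧ y < M := by
  have hs : [x, M, y] <+ A ++ M :: B := triple_sublist_append_cons hx hy
  have hnd := hs.nodup (hw.nodup_iff.2 nodup_range)
  have hxM := lt_of_perm_range hw _ (hs.subset (by simp : x ∈ [x, M, y]))
  have hyM := lt_of_perm_range hw _ (hs.subset (by simp : y ∈ [x, M, y]))
  simp only [nodup_cons, mem_cons, not_or, not_mem_nil, not_false_eq_true, nodup_nil,
    and_true] at hnd
  exact ⟨Nat.lt_of_le_of_ne (not_lt.1 fun hyx => h ⟨x, M, y, hs, hyx, by omega⟩) hnd.1.2,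
    by omega⟩

end Patterns

section Classes

def Avoids1243_2143_231 (w : List ℕ) : Prop := ¬Has1243 w ∧ ¬Has2143 w ∧ ¬Has231 w

def Avoids132_231 (w : List ℕ) : Prop := ¬Has132 w ∧ ¬Has231 w

theorem avoids1243_2143_231_of_length_le_two {w : List ℕ} (hw : w.length ≤ 2) :
    Avoids1243_2143_231 w :=
  ⟨fun ⟨_, _, _, _, hs, _⟩ => absurd (hs.length_le.trans hw) (by simp),
    fun ⟨_, _, _, _, hs, _⟩ => absurd (hs.length_le.trans hw) (by simp),
    fun ⟨_, _, _, hs, _⟩ => absurd (hs.length_le.trans hw) (by simp)⟩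

theorem avoids132_231_of_length_le_two {w : List ℕ} (hw : w.length ≤ 2) : Avoids132_231 w :=
  ⟨fun ⟨_, _, _, hs, _⟩ => absurd (hs.length_le.trans hw) (by simp),
    fun ⟨_, _, _, hs, _⟩ => absurd (hs.length_le.trans hw) (by simp)⟩

section NewMaximum

variable {w : List ℕ} {M : ℕ} (hw : ∀ z ∈ w, z < M)
include hw

theorem avoids1243_2143_231_append_max_iff :
    Avoids1243_2143_231 (w ++ [M]) ↔ Avoids1243_2143_231 w := by
  simp only [Avoids1243_2143_231, has1243_append_max_iff hw, has2143_append_max_iff hw,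
    has231_append_max_iff hw]

theorem avoids1243_2143_231_max_cons_iff :
    Avoids1243_2143_231 (M :: w) ↔ Avoids1243_2143_231 w := by
  simp only [Avoids1243_2143_231, has1243_max_cons_iff hw, has2143_max_cons_iff hw,
    has231_max_cons_iff hw]

theorem avoids132_231_append_max_iff : Avoids132_231 (w ++ [M]) ↔ Avoids132_231 w := by
  simp only [Avoids132_231, has132_append_max_iff hw, has231_append_max_iff hw]

theorem avoids132_231_max_cons_iff : Avoids132_231 (M :: w) ↔ Avoids132_231 w := by
  simp only [Avoids132_231, has132_max_cons_iff hw, has231_max_cons_iff hw]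

end NewMaximum

theorem avoids1243_2143_231_zero_max_cons_map_succ_iff {C : List ℕ} {m : ℕ}
    (hC : ∀ z ∈ C, z < m + 1) :
    Avoids1243_2143_231 (0 :: (m + 2) :: C.map Nat.succ) ↔ Avoids132_231 C := by
  have hlt : ∀ z ∈ C.map Nat.succ, z < m + 2 := by simpa using hC
  have hpos : ∀ z ∈ (m + 2) :: C.map Nat.succ, 0 < z := by simp
  have hsucc : StrictMono Nat.succ := fun _ _ => Nat.succ_lt_succ
  rw [Avoids1243_2143_231, has1243_zero_cons_iff hpos, has2143_zero_cons_iff,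
    has231_zero_cons_iff, has132_max_cons_iff hlt, has2143_max_cons_iff hlt,
    has231_max_cons_iff hlt, has132_map_iff hsucc, has231_map_iff hsucc]
  exact ⟨fun ⟨h132, _, h231⟩ => ⟨h132, h231⟩,
    fun ⟨h132, h231⟩ => ⟨h132, fun h => h132 ((has132_map_iff hsucc).1 h.has132), h231⟩⟩

theorem Avoids132_231.eq_append_max_or_eq_max_cons {w : List ℕ} {m : ℕ}
    (hw : w ~ range (m + 1)) (h : Avoids132_231 w) :
    (∃ u, w = u ++ [m]) ∨ ∃ u, w = m :: u := by
  obtain ⟨A, B, rfl⟩ := append_of_mem (hw.mem_iff.2 (mem_range.2 (lt_add_one m)))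
  rcases A with _ | ⟨a, A⟩
  · exact Or.inr ⟨B, rfl⟩
  rcases B with _ | ⟨b, B⟩
  · exact Or.inl ⟨_, rfl⟩
  obtain ⟨hab, hbm⟩ := lt_of_mem_of_mem_of_not_has231 hw h.2 mem_cons_self mem_cons_self
  exact absurd ⟨a, m, b, triple_sublist_append_cons mem_cons_self mem_cons_self, hab, hbm⟩ h.1

theorem Avoids1243_2143_231.eq_append_max_or_eq_max_cons_or_eq_zero_max_cons {w : List ℕ}
    {m : ℕ} (hw : w ~ range (m + 3)) (h : Avoids1243_2143_231 w) :
    (∃ u, w = u ++ [m + 2]) ∨ (∃ u, w = (m + 2) :: u) ∨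
      ∃ C : List ℕ, w = 0 :: (m + 2) :: C.map Nat.succ := by
  obtain ⟨A, B, rfl⟩ := append_of_mem (hw.mem_iff.2 (mem_range.2 (by omega : m + 2 < m + 3)))
  rcases A with _ | ⟨a, A⟩
  · exact Or.inr (Or.inl ⟨B, rfl⟩)
  rcases B with _ | ⟨b, B⟩
  · exact Or.inl ⟨_, rfl⟩
  have hsplit : ∀ x ∈ a :: A, ∀ y ∈ b :: B, x < y ∧ y < m + 2 :=
    fun x hx y hy => lt_of_mem_of_mem_of_not_has231 hw h.2.2 hx hy
  obtain rfl : A = [] := by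
    rcases A with _ | ⟨a', A⟩
    · rfl
    have hs : [a, a', m + 2, b] <+ a :: a' :: A ++ (m + 2) :: b :: B :=
      (triple_sublist_append_cons mem_cons_self mem_cons_self).cons_cons a
    have haa' := hs.nodup (hw.nodup_iff.2 nodup_range)
    simp only [nodup_cons, mem_cons, not_or] at haa'
    obtain ⟨hab, hbM⟩ := hsplit a (by simp) b (by simp)
    obtain ⟨ha'b, -⟩ := hsplit a' (by simp) b (by simp)
    rcases Nat.lt_or_gt_of_ne haa'.1.1 with haa | haa
    · exact absurd ⟨a, a', m + 2, b, hs, haa, ha'b, hbM⟩ h.1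
    · exact absurd ⟨a, a', m + 2, b, hs, haa, hab, hbM⟩ h.2.1
  obtain rfl : a = 0 := by
    have h0 := hw.mem_iff.2 (mem_range.2 (by omega : 0 < m + 3))
    simp only [cons_append, nil_append, mem_cons] at h0
    rcases h0 with h0 | h0 | h0
    · exact h0.symm
    · omega
    · exact absurd (hsplit a (by simp) 0 (by simpa using h0)).1 (Nat.not_lt_zero a)
  refine Or.inr (Or.inr ⟨(b :: B).map Nat.pred, ?_⟩)
  rw [map_map, cons_append, nil_append]
  congr 2
  refine (map_congr_left fun y hy => ?_).trans (map_id _) |>.symm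
  exact Nat.succ_pred_eq_of_pos (hsplit 0 (by simp) y hy).1

end Classes

section Counting

theorem append_singleton_ne_cons {u v : List ℕ} {M : ℕ} (hu : u ≠ []) (hM : M ∉ u) :
    u ++ [M] ≠ M :: v := by
  rcases u with _ | ⟨a, u⟩
  · exact absurd rfl hu
  · intro h
    simp only [cons_append, cons.injEq] at h
    exact hM (h.1 ▸ mem_cons_self)

theorem cons_cons_ne_append_singleton {a M : ℕ} {D u : List ℕ} (hD : D ≠ []) (hM : M ∉ D) :
    a :: M :: D ≠ u ++ [M] := by
  obtain ⟨D, d, rfl⟩ := (eq_nil_or_concat D).resolve_left hD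
  intro h
  rw [concat_eq_append] at h
  have hdM := (append_inj' (s₁ := a :: M :: D) h rfl).2
  simp only [cons.injEq, and_true] at hdM
  exact hM (by simp [hdM])

theorem disjoint_image_append_max_image_max_cons (P : List ℕ → Prop) (m : ℕ) :
    Disjoint ((· ++ [m + 1]) '' permWords P (m + 1)) (((m + 1) :: ·) '' permWords P (m + 1)) := by
  rw [Set.disjoint_left]
  rintro _ ⟨u, ⟨hu, -⟩, rfl⟩ ⟨v, -, huv⟩
  exact append_singleton_ne_cons (ne_nil_of_perm_range_succ hu)
    (fun h => (lt_of_perm_range hu _ h).false) huv.symm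

theorem permWords_avoids132_231_succ_succ (m : ℕ) :
    permWords Avoids132_231 (m + 2) =
      (· ++ [m + 1]) '' permWords Avoids132_231 (m + 1) ∪
        ((m + 1) :: ·) '' permWords Avoids132_231 (m + 1) := by
  ext w
  constructor
  · rintro ⟨hw, h⟩
    rcases Avoids132_231.eq_append_max_or_eq_max_cons hw h with ⟨u, rfl⟩ | ⟨u, rfl⟩
    · have hu := append_singleton_perm_range_succ_iff.1 hw
      exact Or.inl ⟨u, ⟨hu, (avoids132_231_append_max_iff (lt_of_perm_range hu)).1 h⟩, rfl⟩
    · have hu := cons_perm_range_succ_iff.1 hw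
      exact Or.inr ⟨u, ⟨hu, (avoids132_231_max_cons_iff (lt_of_perm_range hu)).1 h⟩, rfl⟩
  · rintro (⟨u, ⟨hu, h⟩, rfl⟩ | ⟨u, ⟨hu, h⟩, rfl⟩)
    · exact ⟨append_singleton_perm_range_succ_iff.2 hu,
        (avoids132_231_append_max_iff (lt_of_perm_range hu)).2 h⟩
    · exact ⟨cons_perm_range_succ_iff.2 hu,
        (avoids132_231_max_cons_iff (lt_of_perm_range hu)).2 h⟩

theorem ncard_permWords_avoids132_231 (m : ℕ) :
    (permWords Avoids132_231 (m + 1)).ncard = 2 ^ m := by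
  induction m with
  | zero =>
    have : permWords Avoids132_231 1 = {[0]} := by
      ext w
      simp only [permWords, Set.mem_ofPred_eq, Set.mem_singleton_iff, range_one, perm_singleton]
      exact and_iff_left_of_imp fun h => avoids132_231_of_length_le_two (by simp [h])
    simp [this]
  | succ m ih =>
    have hfin := permWords_finite Avoids132_231 (m + 1)
    rw [permWords_avoids132_231_succ_succ, Set.ncard_union_eq
      (disjoint_image_append_max_image_max_cons _ m) (hfin.image _) (hfin.image _),
      Set.ncard_image_of_injective _ (append_left_injective _),
      Set.ncard_image_of_injective _ cons_injective, ih, pow_succ, mul_two]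

theorem permWords_avoids1243_2143_231_two :
    permWords Avoids1243_2143_231 2 = permWords Avoids132_231 2 :=
  Set.ext fun _ => and_congr_right fun hw =>
    have hlen : _ ≤ 2 := by simp [hw.length_eq]
    iff_of_true (avoids1243_2143_231_of_length_le_two hlen) (avoids132_231_of_length_le_two hlen)

theorem permWords_avoids1243_2143_231_succ_succ_succ (m : ℕ) :
    permWords Avoids1243_2143_231 (m + 3) =
      (· ++ [m + 2]) '' permWords Avoids1243_2143_231 (m + 2) ∪
        ((m + 2) :: ·) '' permWords Avoids1243_2143_231 (m + 2) ∪
          (fun C => 0 :: (m + 2) :: C.map Nat.succ) '' permWords Avoids132_231 (m + 1) := by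
  ext w
  constructor
  · rintro ⟨hw, h⟩
    rcases Avoids1243_2143_231.eq_append_max_or_eq_max_cons_or_eq_zero_max_cons hw h with
      ⟨u, rfl⟩ | ⟨u, rfl⟩ | ⟨C, rfl⟩
    · have hu := append_singleton_perm_range_succ_iff.1 hw
      exact Or.inl (Or.inl
        ⟨u, ⟨hu, (avoids1243_2143_231_append_max_iff (lt_of_perm_range hu)).1 h⟩, rfl⟩)
    · have hu := cons_perm_range_succ_iff.1 hw
      exact Or.inl (Or.inr
        ⟨u, ⟨hu, (avoids1243_2143_231_max_cons_iff (lt_of_perm_range hu)).1 h⟩, rfl⟩)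
    · have hC := zero_cons_cons_map_succ_perm_range_iff.1 hw
      exact Or.inr ⟨C,
        ⟨hC, (avoids1243_2143_231_zero_max_cons_map_succ_iff (lt_of_perm_range hC)).1 h⟩, rfl⟩
  · rintro ((⟨u, ⟨hu, h⟩, rfl⟩ | ⟨u, ⟨hu, h⟩, rfl⟩) | ⟨C, ⟨hC, h⟩, rfl⟩)
    · exact ⟨append_singleton_perm_range_succ_iff.2 hu,
        (avoids1243_2143_231_append_max_iff (lt_of_perm_range hu)).2 h⟩
    · exact ⟨cons_perm_range_succ_iff.2 hu,
        (avoids1243_2143_231_max_cons_iff (lt_of_perm_range hu)).2 h⟩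
    · exact ⟨zero_cons_cons_map_succ_perm_range_iff.2 hC,
        (avoids1243_2143_231_zero_max_cons_map_succ_iff (lt_of_perm_range hC)).2 h⟩

theorem ncard_permWords_avoids1243_2143_231_succ_succ_succ (m : ℕ) :
    (permWords Avoids1243_2143_231 (m + 3)).ncard =
      2 * (permWords Avoids1243_2143_231 (m + 2)).ncard + 2 ^ m := by
  have hfin := permWords_finite Avoids1243_2143_231 (m + 2)
  have hdisj : Disjoint ((· ++ [m + 2]) '' permWords Avoids1243_2143_231 (m + 2) ∪
        ((m + 2) :: ·) '' permWords Avoids1243_2143_231 (m + 2))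
      ((fun C => 0 :: (m + 2) :: C.map Nat.succ) '' permWords Avoids132_231 (m + 1)) := by
    rw [Set.disjoint_right]
    rintro _ ⟨C, ⟨hC, -⟩, rfl⟩ (⟨u, -, hu⟩ | ⟨v, -, hv⟩)
    · refine cons_cons_ne_append_singleton (by simpa using ne_nil_of_perm_range_succ hC) ?_ hu.symm
      simpa using fun h => (lt_of_perm_range hC _ h).false
    · simp at hv
  have hinj : Function.Injective fun C : List ℕ => 0 :: (m + 2) :: C.map Nat.succ :=
    fun C D h => map_injective_iff.2 Nat.succ_injective (by simpa using h)
  rw [permWords_avoids1243_2143_231_succ_succ_succ,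
    Set.ncard_union_eq hdisj ((hfin.image _).union (hfin.image _))
      ((permWords_finite _ _).image _),
    Set.ncard_union_eq (disjoint_image_append_max_image_max_cons _ (m + 1)) (hfin.image _)
      (hfin.image _),
    Set.ncard_image_of_injective _ (append_left_injective _),
    Set.ncard_image_of_injective _ cons_injective, Set.ncard_image_of_injective _ hinj,
    ncard_permWords_avoids132_231, two_mul]

theorem ncard_permWords_avoids1243_2143_231 (k : ℕ) :
    (permWords Avoids1243_2143_231 (k + 3)).ncard = (k + 5) * 2 ^ k := by
  induction k with
  | zero =>
    rw [ncard_permWords_avoids1243_2143_231_succ_succ_succ, permWords_avoids1243_2143_231_two,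
      ncard_permWords_avoids132_231]
    rfl
  | succ k ih =>
    rw [ncard_permWords_avoids1243_2143_231_succ_succ_succ, ih, pow_succ]
    ring

end Counting

theorem card_avoiders_eq_ncard_permWords (n : ℕ) :
    Nat.card {π : Equiv.Perm (Fin n) //
        Avoids π pat1243 ∧ Avoids π pat2143 ∧ Avoids π pat231} =
      (permWords Avoids1243_2143_231 n).ncard := by
  rw [← card_subtype_oneLine_eq_ncard]
  exact Nat.card_congr <| Equiv.subtypeEquivRight fun π => by
    simp only [Avoids, Avoids1243_2143_231, contains_pat1243_iff, contains_pat2143_iff,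
      contains_pat231_iff]

/-- For `n ≥ 3`, `|S_n(1243, 2143, 231)| = (n+2)·2^{n-3}`; equivalently, for `n ≥ 2` this
number equals `2^{n-1} + (n-2)·2^{n-3}` (the second term being `0` when `n = 2`, as is
automatic with truncated subtraction). -/
theorem card_avoid_1243_2143_231 (n : ℕ) :
    (3 ≤ n →
      Nat.card {π : Equiv.Perm (Fin n) //
          Avoids π pat1243 ∧ Avoids π pat2143 ∧ Avoids π pat231}
        = (n + 2) * 2 ^ (n - 3)) ∧
    (2 ≤ n →
      Nat.card {π : Equiv.Perm (Fin n) //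
          Avoids π pat1243 ∧ Avoids π pat2143 ∧ Avoids π pat231}
        = 2 ^ (n - 1) + (n - 2) * 2 ^ (n - 3)) := by
  rw [card_avoiders_eq_ncard_permWords]
  refine ⟨fun hn => ?_, fun hn => ?_⟩
  · obtain ⟨k, rfl⟩ := Nat.exists_eq_add_of_le' hn
    simpa using ncard_permWords_avoids1243_2143_231 k
  · rcases Nat.lt_or_ge n 3 with hn3 | hn3
    · obtain rfl : n = 2 := by omega
      rw [permWords_avoids1243_2143_231_two, ncard_permWords_avoids132_231]
      rfl
    · obtain ⟨k, rfl⟩ := Nat.exists_eq_add_of_le' hn3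
      rw [ncard_permWords_avoids1243_2143_231, show k + 3 - 1 = k + 2 by omega,
        show k + 3 - 2 = k + 1 by omega, Nat.add_sub_cancel]
      ring
end

section
/- For m ≥ 3, let T_m be the set of permutations τ ∈ S_m with τ_{m−1} = m and τ_m = m−1. A permutation π ∈ S_n avoids every pattern in T_m if and only if every element of its essential set E(π) has rank at most m−3. -/
/-!
An occurrence of `τ ∈ T_m` at positions `f₁ < ⋯ < f_m` gives the square `(a, π b)` with
`a = f_{m-1}`, `b = f_m`: it lies in the diagram because `a < b` and `π b < π a`, and the `m - 2`
positions `f₁, …, f_{m-2}` witness that its rank is at least `m - 2`. Conversely, any `m - 2` of the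
positions counted by the rank of a diagram square `(a, π b)`, followed by `a` and `b`, form an
occurrence of a pattern in `T_m`. Rank grows weakly to the south and east, and a maximal diagram
square south-east of a given one is essential, so the largest rank on the diagram is attained on
the essential set.
-/

theorem Fin.strictMono_snoc {α : Type*} [Preorder α] {n : ℕ} {f : Fin n → α} {x : α} :
    StrictMono (Fin.snoc (α := fun _ ↦ α) f x) ↔ StrictMono f ∧ ∀ i, f i < x := by
  simpa [Fin.insertNth_last'] using Fin.strictMono_insertNth_iff (Fin.last n) x f

theorem exists_perm_lt_iff_of_injective {α : Type*} [LinearOrder α] {m : ℕ} {g : Fin m → α}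
    (hg : Function.Injective g) : ∃ τ : Equiv.Perm (Fin m), ∀ a b, τ a < τ b ↔ g a < g b := by
  have hs : StrictMono (g ∘ Tuple.sort g) :=
    (Tuple.monotone_sort g).strictMono_of_injective (hg.comp (Tuple.sort g).injective)
  refine ⟨(Tuple.sort g)⁻¹, fun a b ↦ ?_⟩
  simpa using (hs.lt_iff_lt (a := (Tuple.sort g)⁻¹ a) (b := (Tuple.sort g)⁻¹ b)).symm

theorem Equiv.Perm.eq_last_of_forall_lt {k : ℕ} {τ : Equiv.Perm (Fin (k + 1))} {x : Fin (k + 1)}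
    (h : ∀ y ≠ x, τ y < τ x) : τ x = Fin.last k := by
  by_contra hx
  have hy : τ.symm (Fin.last k) ≠ x := fun hy ↦ hx (by simp [← hy])
  simpa using (h _ hy).trans_le (Fin.le_last _)

theorem Equiv.Perm.eq_castSucc_last_of_forall_lt {k : ℕ} {τ : Equiv.Perm (Fin (k + 2))}
    {x x' : Fin (k + 2)} (hxx' : x ≠ x') (hx' : τ x' = Fin.last (k + 1))
    (h : ∀ y, y ≠ x → y ≠ x' → τ y < τ x) : τ x = (Fin.last k).castSucc := by
  by_contra hx
  have hy : τ.symm (Fin.last k).castSucc ≠ x := fun hy ↦ hx (by simp [← hy])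
  have hy' : τ.symm (Fin.last k).castSucc ≠ x' := fun hy' ↦ by
    simpa [hy', hx'] using congrArg Fin.val (τ.apply_symm_apply (Fin.last k).castSucc)
  have hlt : (Fin.last k).castSucc < τ x := by simpa using h _ hy hy'
  have hne : τ x ≠ Fin.last (k + 1) := hx' ▸ τ.injective.ne hxx'
  rw [Fin.lt_def, Fin.val_castSucc, Fin.val_last] at hlt
  exact hne (Fin.ext (by rw [Fin.val_last]; omega))

section

variable {n : ℕ} (π : Equiv.Perm (Fin n))

theorem rank_mono : Monotone (rank π) := fun p q hpq ↦
  Finset.card_le_card fun i ↦ by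
    simp only [Finset.mem_filter, Finset.mem_univ, true_and]
    exact fun hi ↦ ⟨hi.1.trans_le hpq.1, hi.2.trans_le hpq.2⟩

theorem mem_essSet_of_maximal {q : Fin n × Fin n} (hq : Maximal (· ∈ Diagram π) q) :
    q ∈ EssSet π := by
  refine ⟨hq.prop, fun i' hi' hmem ↦ ?_, fun j' hj' hmem ↦ ?_⟩
  · have : i' ≤ q.1 :=
      (hq.le_of_ge hmem ⟨Fin.le_def.2 (show (q.1 : ℕ) ≤ i' by omega), le_rfl⟩).1
    rw [Fin.le_def] at this; omega
  · have : j' ≤ q.2 :=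
      (hq.le_of_ge hmem ⟨le_rfl, Fin.le_def.2 (show (q.2 : ℕ) ≤ j' by omega)⟩).2
    rw [Fin.le_def] at this; omega

theorem exists_mem_essSet_rank_le {p : Fin n × Fin n} (hp : p ∈ Diagram π) :
    ∃ q ∈ EssSet π, rank π p ≤ rank π q := by
  obtain ⟨q, hpq, hq⟩ := Finite.exists_le_maximal hp
  exact ⟨q, mem_essSet_of_maximal π hq, rank_mono π hpq⟩

/-- `τ ∈ T_{k+2}`: in one-line notation `τ` ends with `k+2, k+1`. -/
def EndsInTopDescent {k : ℕ} (τ : Equiv.Perm (Fin (k + 2))) : Prop :=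
  τ (Fin.last k).castSucc = Fin.last (k + 1) ∧ τ (Fin.last (k + 1)) = (Fin.last k).castSucc

theorem exists_mem_diagram_le_rank_of_contains {k : ℕ} {τ : Equiv.Perm (Fin (k + 2))}
    (hτ : EndsInTopDescent τ) (hc : Contains π τ) : ∃ p ∈ Diagram π, k ≤ rank π p := by
  obtain ⟨hτa, hτb⟩ := hτ
  obtain ⟨f, hf, hlt⟩ := hc
  have hab : f (Fin.last k).castSucc < f (Fin.last (k + 1)) := hf (Fin.castSucc_lt_last _)
  have hba : π (f (Fin.last (k + 1))) < π (f (Fin.last k).castSucc) := by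
    rw [← hlt, hτa, hτb]
    exact Fin.castSucc_lt_last _
  have below (i : Fin k) : τ i.castSucc.castSucc < τ (Fin.last (k + 1)) := by
    have ha : τ i.castSucc.castSucc ≠ τ (Fin.last k).castSucc :=
      τ.injective.ne (Fin.castSucc_injective _ |>.ne (Fin.castSucc_lt_last i).ne)
    have hb : τ i.castSucc.castSucc ≠ τ (Fin.last (k + 1)) :=
      τ.injective.ne (Fin.castSucc_lt_last _).ne
    rw [hτa] at ha
    rw [hτb] at hb ⊢
    simp only [ne_eq, Fin.ext_iff, Fin.val_last, Fin.val_castSucc] at ha hb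
    rw [Fin.lt_def, Fin.val_castSucc, Fin.val_last]
    omega
  refine ⟨(f (Fin.last k).castSucc, π (f (Fin.last (k + 1)))), ⟨hba, by simpa using hab⟩, ?_⟩
  calc k = (Finset.univ : Finset (Fin k)).card := (Finset.card_fin k).symm
    _ ≤ rank π _ := Finset.card_le_card_of_injOn (fun i ↦ f i.castSucc.castSucc)
        (fun i _ ↦ by
          simp only [Finset.coe_filter, Finset.mem_univ, true_and, Set.mem_ofPred_eq]
          exact ⟨hf (Fin.castSucc_lt_castSucc_iff.2 (Fin.castSucc_lt_last i)),
            (hlt _ _).1 (below i)⟩)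
        (fun i _ j _ hij ↦ by simpa using hf.injective hij)

theorem exists_contains_of_mem_diagram {k : ℕ} {p : Fin n × Fin n} (hp : p ∈ Diagram π)
    (hk : k ≤ rank π p) : ∃ τ : Equiv.Perm (Fin (k + 2)), EndsInTopDescent τ ∧ Contains π τ := by
  obtain ⟨hpa, hpb⟩ := hp
  set a := p.1
  set b := π.symm p.2
  have hba : π b < π a := by rwa [π.apply_symm_apply]
  obtain ⟨S, hS, hcard⟩ := Finset.exists_subset_card_eq hk
  set g := S.orderEmbOfFin hcard
  have hg (i : Fin k) : g i < a ∧ π (g i) < π b := by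
    simpa [g, a, b] using hS (S.orderEmbOfFin_mem hcard i)
  set f : Fin (k + 2) → Fin n := Fin.snoc (Fin.snoc g a) b
  have hf : StrictMono f := by
    simp only [f, Fin.strictMono_snoc, Fin.forall_fin_succ', Fin.snoc_castSucc, Fin.snoc_last]
    exact ⟨⟨g.strictMono, fun i ↦ (hg i).1⟩, fun i ↦ (hg i).1.trans hpb, hpb⟩
  have hfa : π (f (Fin.last k).castSucc) = π a := by simp [f]
  have hfb : π (f (Fin.last (k + 1))) = π b := by simp [f]
  have below (y : Fin (k + 2)) (hya : y ≠ (Fin.last k).castSucc) (hyb : y ≠ Fin.last (k + 1)) :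
      π (f y) < π b := by
    obtain ⟨z, rfl⟩ | rfl := y.eq_castSucc_or_eq_last
    · obtain ⟨i, rfl⟩ | rfl := z.eq_castSucc_or_eq_last
      · simpa [f] using (hg i).2
      · exact absurd rfl hya
    · exact absurd rfl hyb
  obtain ⟨τ, hτ⟩ := exists_perm_lt_iff_of_injective (π.injective.comp hf.injective)
  simp only [Function.comp_apply] at hτ
  have hτa : τ (Fin.last k).castSucc = Fin.last (k + 1) := by
    refine Equiv.Perm.eq_last_of_forall_lt fun y hy ↦ (hτ _ _).2 ?_
    rw [hfa]
    by_cases hyb : y = Fin.last (k + 1)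
    · rwa [hyb, hfb]
    · exact (below y hy hyb).trans hba
  have hτb : τ (Fin.last (k + 1)) = (Fin.last k).castSucc :=
    Equiv.Perm.eq_castSucc_last_of_forall_lt (Fin.castSucc_lt_last _).ne' hτa
      fun y hyb hya ↦ (hτ _ _).2 (hfb ▸ below y hya hyb)
  exact ⟨τ, ⟨hτa, hτb⟩, f, hf, hτ⟩

theorem exists_contains_iff_exists_mem_essSet_le_rank (k : ℕ) :
    (∃ τ : Equiv.Perm (Fin (k + 2)), EndsInTopDescent τ ∧ Contains π τ) ↔
      ∃ p ∈ EssSet π, k ≤ rank π p := by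
  constructor
  · rintro ⟨τ, hτ, hc⟩
    obtain ⟨p, hp, hkp⟩ := exists_mem_diagram_le_rank_of_contains π hτ hc
    obtain ⟨q, hq, hpq⟩ := exists_mem_essSet_rank_le π hp
    exact ⟨q, hq, hkp.trans hpq⟩
  · rintro ⟨p, hp, hkp⟩
    exact exists_contains_of_mem_diagram π hp.1 hkp

end

/-- For `m ≥ 3`, a permutation `π ∈ S_n` avoids every pattern `τ ∈ T_m` (i.e. every
`τ ∈ S_m` with `τ_{m-1} = m` and `τ_m = m-1`, in 1-based one-line notation) iff every
element of its essential set has rank at most `m - 3`. -/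
theorem avoids_Tm_iff_rank_le (n m : ℕ) (hm : 3 ≤ m) (π : Equiv.Perm (Fin n)) :
    (∀ τ : Equiv.Perm (Fin m),
        (τ ⟨m - 2, by omega⟩ : ℕ) = m - 1 → (τ ⟨m - 1, by omega⟩ : ℕ) = m - 2 →
        Avoids π τ) ↔
      ∀ p ∈ EssSet π, rank π p ≤ m - 3 := by
  obtain ⟨k, rfl⟩ : ∃ k, m = k + 2 := ⟨m - 2, by omega⟩
  have hT (τ : Equiv.Perm (Fin (k + 2))) :
      ((τ ⟨k + 2 - 2, by omega⟩ : ℕ) = k + 2 - 1 ∧ (τ ⟨k + 2 - 1, by omega⟩ : ℕ) = k + 2 - 2) ↔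
        EndsInTopDescent τ := by
    simp only [EndsInTopDescent, Fin.ext_iff, Fin.val_last, Fin.val_castSucc]
    exact Iff.rfl
  rw [← not_iff_not]
  push Not
  simp only [Avoids, not_not, ← and_assoc, hT]
  refine (exists_contains_iff_exists_mem_essSet_le_rank π k).trans ?_
  exact exists_congr fun p ↦ and_congr_right fun _ ↦ by omega
end
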